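/- arXiv:2312.04925 — 10 statements merged into one kernel-verified Lean document; each statement's English description precedes it below -/
import Mathlib

section
/- Inertia bound (Cvetković): Let G be a finite simple graph on n vertices and let A be a weighted adjacency matrix of G. Then α(G) ≤ n_{≥0}(A), the number of non-negative eigenvalues of A counted with multiplicity. -/
/-!
The quadratic form `x ↦ x ⬝ᵥ A *ᵥ x` vanishes on the `|s|`-dimensional space of vectors supported
on the independent set `s`, whereas it is negative definite on the span of the eigenvectors with
negative eigenvalues. Hence the former space injects into the coordinates along the eigenvectors
with non-negative eigenvalues.
-/

open Matrix Module

lemma eq_zero_of_sum_mul_sq_nonneg {ι : Type*} [Fintype ι] {d y : ι → ℝ}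
    (hy : ∀ i, 0 ≤ d i → y i = 0) (hsum : 0 ≤ ∑ i, d i * y i ^ 2) : y = 0 := by
  have hterm (i : ι) : d i * y i ^ 2 ≤ 0 := by
    rcases le_or_gt 0 (d i) with h | h
    · simp [hy i h]
    · exact mul_nonpos_of_nonpos_of_nonneg h.le (sq_nonneg _)
  have hzero : ∀ i ∈ Finset.univ, d i * y i ^ 2 = 0 :=
    (Finset.sum_eq_zero_iff_of_nonpos fun i _ => hterm i).1
      (le_antisymm (Finset.sum_nonpos fun i _ => hterm i) hsum)
  funext i
  rcases le_or_gt 0 (d i) with h | h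
  · exact hy i h
  · simpa [h.ne] using hzero i (Finset.mem_univ i)

lemma Matrix.dotProduct_mulVec_self_eq_zero {R n : Type*} [NonUnitalNonAssocSemiring R] [Fintype n]
    {A : Matrix n n R} {x : n → R} (h : ∀ i j, x i ≠ 0 → x j ≠ 0 → A i j = 0) :
    x ⬝ᵥ A *ᵥ x = 0 := by
  refine Finset.sum_eq_zero fun i _ => ?_
  by_cases hi : x i = 0
  · simp [hi]
  refine mul_eq_zero_of_right _ (Finset.sum_eq_zero fun j _ => ?_)
  by_cases hj : x j = 0
  · simp [hj]
  simp [h i j hi hj]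

namespace Matrix.IsHermitian

variable {n : Type*} [Fintype n] [DecidableEq n] {A : Matrix n n ℝ} (hA : A.IsHermitian)

lemma dotProduct_mulVec_self_eq_sum_eigenvalues (x : n → ℝ) :
    x ⬝ᵥ A *ᵥ x =
      ∑ j, hA.eigenvalues j * ((star (hA.eigenvectorUnitary : Matrix n n ℝ) *ᵥ x) j) ^ 2 := by
  conv_lhs => rw [hA.spectral_theorem, Unitary.conjStarAlgAut_apply]
  rw [← mulVec_mulVec, ← mulVec_mulVec, dotProduct_mulVec, ← mulVec_transpose,
    ← conjTranspose_eq_transpose_of_trivial, ← star_eq_conjTranspose]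
  simp only [dotProduct, mulVec_diagonal, Function.comp_apply, RCLike.ofReal_real_eq_id, id]
  exact Finset.sum_congr rfl fun j _ => by ring

lemma finrank_le_card_nonneg_eigenvalues (W : Submodule ℝ (n → ℝ))
    (hW : ∀ x ∈ W, 0 ≤ x ⬝ᵥ A *ᵥ x) :
    finrank ℝ W ≤ Fintype.card {i // 0 ≤ hA.eigenvalues i} := by
  let U : Matrix n n ℝ := hA.eigenvectorUnitary
  let f : W →ₗ[ℝ] {i // 0 ≤ hA.eigenvalues i} → ℝ :=
    LinearMap.funLeft ℝ ℝ Subtype.val ∘ₗ (star U).mulVecLin ∘ₗ W.subtype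
  have hf : Function.Injective f := by
    refine (injective_iff_map_eq_zero f).2 fun x hx => ?_
    have hy : star U *ᵥ (x : n → ℝ) = 0 :=
      eq_zero_of_sum_mul_sq_nonneg (fun i hi => congr_fun hx ⟨i, hi⟩)
        (hA.dotProduct_mulVec_self_eq_sum_eigenvalues x ▸ hW x x.2)
    refine Subtype.ext ?_
    rw [← one_mulVec (x : n → ℝ), ← Unitary.mul_star_self_of_mem hA.eigenvectorUnitary.2,
      ← mulVec_mulVec, hy, mulVec_zero, Submodule.coe_zero]
  simpa using LinearMap.finrank_le_finrank_of_injective hf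

end Matrix.IsHermitian

/-- **Inertia bound (Cvetković).** If `A` is a symmetric weighted adjacency matrix of an
`n`-vertex graph `G`, then the independence number of `G` is at most the number of
non-negative eigenvalues of `A`, counted with multiplicity. -/
theorem inertia_bound (n : ℕ) (G : SimpleGraph (Fin n)) (A : Matrix (Fin n) (Fin n) ℝ)
    (hA : A.IsHermitian) (hsupp : ∀ i j, ¬ G.Adj i j → A i j = 0)
    (s : Finset (Fin n)) (hs : ∀ i ∈ s, ∀ j ∈ s, ¬ G.Adj i j) :
    s.card ≤ Fintype.card {i : Fin n // 0 ≤ hA.eigenvalues i} := by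
  set extend := Function.ExtendByZero.linearMap ℝ ((↑) : s → Fin n)
  have hrank : finrank ℝ (LinearMap.range extend) = s.card := by
    rw [LinearMap.finrank_range_of_inj
      (Function.extend_injective Subtype.val_injective (0 : Fin n → ℝ))]
    simp
  have hsupport (c : s → ℝ) (i : Fin n) (hi : extend c i ≠ 0) : i ∈ s := by
    by_contra h
    exact hi (Function.extend_apply' _ _ _ fun ⟨a, ha⟩ => h (ha ▸ a.2))
  rw [← hrank]
  refine hA.finrank_le_card_nonneg_eigenvalues _ ?_
  rintro _ ⟨c, rfl⟩
  refine (dotProduct_mulVec_self_eq_zero fun i j hi hj => ?_).ge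
  exact hsupp i j (hs i (hsupport c i hi) j (hsupport c j hj))
end

section
/- Sinkovic's theorem: Let G be the Paley graph on 17 vertices. Then α(G) = 3, but n_{≥0}(A) ≥ 4 for every weighted adjacency matrix A of G. -/
open Matrix Finset

lemma paley17_aux : ∀ x y z : ZMod 17, z ≠ 0 → x - y = z ^ 2 →
    ∃ w : ZMod 17, w ≠ 0 ∧ y - x = w ^ 2 := by
  decide

/-- The Paley graph on 17 vertices: `x` is adjacent to `y` iff `x ≠ y` and `x - y` is a
nonzero square in `ZMod 17`. -/
def paley17 : SimpleGraph (ZMod 17) where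
  Adj x y := x ≠ y ∧ ∃ z : ZMod 17, z ≠ 0 ∧ x - y = z ^ 2
  symm := by
    constructor
    rintro x y ⟨hxy, z, hz, h⟩
    exact ⟨hxy.symm, paley17_aux x y z hz h⟩
  loopless := ⟨fun x h => h.1 rfl⟩

/-!
Let `F` be the matrix whose columns are the eigenvectors of `A` with non-negative eigenvalue.
The quadratic form of `A` is negative definite on the left kernel of `F`, and it vanishes on
vectors supported on an independent set; so the rows of `F` indexed by an independent set are
linearly independent. With `{0, 3, 6}` this gives `F` at least three columns. If it has exactly
three, let `D(a, b, c)` be the determinant of the rows `a, b, c` of `F`. For independent triples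
`{a, b, c}` and `{a, b, d}` with `cd` an edge, the linear relation among four vectors of `ℝ³`
yields a vector of the left kernel supported on `{a, b, c, d}` whose quadratic form is
`-2 A_cd D(a, b, c) D(a, b, d)`, so `A_cd D(a, b, c) D(a, b, d) > 0`. Twenty such inequalities, in
which every edge weight and every determinant occurs exactly twice, multiply to `0 < -X²`.
-/

namespace Matrix

section SupportedVectors

variable {n m ι R : Type*} [DecidableEq n] [Fintype ι] [CommSemiring R] {v : ι → n} (t : ι → R)

theorem sum_smul_single_apply (hv : v.Injective) (k : ι) :
    (∑ i, t i • Pi.single (v i) (1 : R)) (v k) = t k := by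
  classical
  simp only [Finset.sum_apply, Pi.smul_apply, Pi.single_apply, hv.eq_iff, smul_eq_mul, mul_ite,
    mul_one, mul_zero, Finset.sum_ite_eq, Finset.mem_univ, if_true]

variable [Fintype n]

theorem sum_smul_single_vecMul (F : Matrix n m R) :
    (∑ i, t i • Pi.single (v i) 1) ᵥ* F = ∑ i, t i • F (v i) := by
  simp only [sum_vecMul, smul_vecMul, single_one_vecMul]
  rfl

theorem sum_smul_single_dotProduct_mulVec (A : Matrix n n R) :
    (∑ i, t i • Pi.single (v i) 1) ⬝ᵥ A *ᵥ ∑ i, t i • Pi.single (v i) 1 =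
      ∑ i, ∑ j, t i * t j * A (v i) (v j) := by
  simp only [mulVec_sum, mulVec_smul, sum_dotProduct, dotProduct_sum, smul_dotProduct,
    dotProduct_smul, mulVec_single_one, single_one_dotProduct, smul_eq_mul, Finset.mul_sum,
    col_apply]
  rw [Finset.sum_comm]
  exact Finset.sum_congr rfl fun i _ => Finset.sum_congr rfl fun j _ => by ring

end SupportedVectors

section FinThree

variable {n R : Type*} [CommRing R] (F : Matrix n (Fin 3) R) (a b c d : n)

theorem det_submatrix_linear_relation :
    (F.submatrix ![b, c, d] id).det • F a - (F.submatrix ![a, c, d] id).det • F b +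
      (F.submatrix ![a, b, d] id).det • F c - (F.submatrix ![a, b, c] id).det • F d = 0 := by
  ext j
  fin_cases j <;>
    simp only [det_fin_three, submatrix_apply, cons_val_zero, cons_val_one, cons_val, id_eq,
      Pi.sub_apply, Pi.add_apply, Pi.smul_apply, smul_eq_mul, Pi.zero_apply, Fin.zero_eta,
      Fin.mk_one, Fin.reduceFinMk] <;>
    ring

theorem det_submatrix_swap_zero_one :
    (F.submatrix ![a, b, c] id).det = -(F.submatrix ![b, a, c] id).det := by
  simp only [det_fin_three, submatrix_apply, cons_val_zero, cons_val_one, cons_val, id_eq]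
  ring

theorem det_submatrix_swap_one_two :
    (F.submatrix ![a, b, c] id).det = -(F.submatrix ![a, c, b] id).det := by
  simp only [det_fin_three, submatrix_apply, cons_val_zero, cons_val_one, cons_val, id_eq]
  ring

end FinThree

variable {n m ι : Type*} [Fintype n] [Fintype ι]

section Spectral

variable [DecidableEq n] {A : Matrix n n ℝ} (hA : A.IsHermitian)
include hA

theorem IsHermitian.sum_dotProduct_eigenvectorBasis_smul (w : n → ℝ) :
    ∑ i, ((hA.eigenvectorBasis i).ofLp ⬝ᵥ w) • (hA.eigenvectorBasis i).ofLp = w := by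
  simpa [EuclideanSpace.inner_eq_star_dotProduct, dotProduct_comm]
    using congrArg WithLp.ofLp (hA.eigenvectorBasis.sum_repr' (WithLp.toLp 2 w))

theorem IsHermitian.dotProduct_mulVec_self (w : n → ℝ) :
    w ⬝ᵥ A *ᵥ w = ∑ i, hA.eigenvalues i * ((hA.eigenvectorBasis i).ofLp ⬝ᵥ w) ^ 2 := by
  set b := hA.eigenvectorBasis
  calc w ⬝ᵥ A *ᵥ w = w ⬝ᵥ A *ᵥ ∑ i, ((b i).ofLp ⬝ᵥ w) • (b i).ofLp := by
        rw [hA.sum_dotProduct_eigenvectorBasis_smul]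
    _ = ∑ i, ((b i).ofLp ⬝ᵥ w) * (hA.eigenvalues i * (w ⬝ᵥ (b i).ofLp)) := by
      simp only [mulVec_sum, mulVec_smul, hA.mulVec_eigenvectorBasis, dotProduct_sum,
        dotProduct_smul, smul_eq_mul, b]
    _ = _ := by
      refine Finset.sum_congr rfl fun i _ => ?_
      rw [dotProduct_comm w]
      ring

end Spectral

def NegDefOnLeftKer (A : Matrix n n ℝ) (F : Matrix n m ℝ) : Prop :=
  ∀ w : n → ℝ, w ≠ 0 → w ᵥ* F = 0 → w ⬝ᵥ A *ᵥ w < 0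

noncomputable def IsHermitian.nonnegEigenvectors [DecidableEq n] {A : Matrix n n ℝ}
    (hA : A.IsHermitian) : Matrix n {i // 0 ≤ hA.eigenvalues i} ℝ :=
  of fun x i => hA.eigenvectorBasis i x

theorem IsHermitian.negDefOnLeftKer_nonnegEigenvectors [DecidableEq n] {A : Matrix n n ℝ}
    (hA : A.IsHermitian) : NegDefOnLeftKer A hA.nonnegEigenvectors := by
  intro w hw hwF
  set c := fun i => (hA.eigenvectorBasis i).ofLp ⬝ᵥ w
  have hc : ∀ i, 0 ≤ hA.eigenvalues i → c i = 0 := fun i hi => by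
    simpa [vecMul, nonnegEigenvectors, dotProduct, mul_comm, c] using congrFun hwF ⟨i, hi⟩
  obtain ⟨j, hj⟩ : ∃ j, c j ≠ 0 := by
    by_contra! h
    exact hw (by simpa [c, h] using (hA.sum_dotProduct_eigenvectorBasis_smul w).symm)
  have hneg : hA.eigenvalues j < 0 := by
    by_contra! h
    exact hj (hc j h)
  rw [hA.dotProduct_mulVec_self]
  refine Finset.sum_neg' (fun i _ => ?_) ⟨j, Finset.mem_univ j, by nlinarith [sq_pos_of_ne_zero hj]⟩
  rcases le_or_gt 0 (hA.eigenvalues i) with hi | hi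
  · simp [c, hc i hi]
  · nlinarith [sq_nonneg (c i)]

namespace NegDefOnLeftKer

variable {A : Matrix n n ℝ}

theorem submatrix_equiv {m' : Type*} [Fintype m] {F : Matrix n m ℝ} (h : NegDefOnLeftKer A F)
    (e : m' ≃ m) : NegDefOnLeftKer A (F.submatrix id e) := by
  intro w hw hwF
  refine h w hw (funext fun k => ?_)
  simpa [vecMul, dotProduct] using congrFun hwF (e.symm k)

theorem linearIndependent {F : Matrix n m ℝ} (h : NegDefOnLeftKer A F) {v : ι → n}
    (hv : v.Injective) (hA : ∀ i j, A (v i) (v j) = 0) :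
    LinearIndependent ℝ fun i => F (v i) := by
  classical
  rw [Fintype.linearIndependent_iff]
  intro t ht
  by_contra! hne
  obtain ⟨k, hk⟩ := hne
  have hw : ∑ i, t i • Pi.single (v i) (1 : ℝ) ≠ 0 := fun h0 => hk <| by
    simpa [sum_smul_single_apply t hv] using congrFun h0 (v k)
  have := h _ hw (by rw [sum_smul_single_vecMul, ht])
  simp [sum_smul_single_dotProduct_mulVec, hA] at this

theorem card_le [Fintype m] {F : Matrix n m ℝ} (h : NegDefOnLeftKer A F) {v : ι → n}
    (hv : v.Injective) (hA : ∀ i j, A (v i) (v j) = 0) :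
    Fintype.card ι ≤ Fintype.card m := by
  simpa using (h.linearIndependent hv hA).fintype_card_le_finrank

theorem det_submatrix_ne_zero [Fintype m] [DecidableEq m] {F : Matrix n m ℝ}
    (h : NegDefOnLeftKer A F) {v : m → n} (hv : v.Injective) (hA : ∀ i j, A (v i) (v j) = 0) :
    (F.submatrix v id).det ≠ 0 :=
  (isUnit_iff_isUnit_det _).mp (linearIndependent_rows_iff_isUnit.mp (h.linearIndependent hv hA))
    |>.ne_zero

theorem mul_neg_of_isotropic_off_pair {F : Matrix n m ℝ} (h : NegDefOnLeftKer A F)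
    (hA : A.IsSymm) {v : ι → n} (hv : v.Injective) {p q : ι} (hpq : p ≠ q)
    (hA0 : ∀ i j, s(i, j) ≠ s(p, q) → A (v i) (v j) = 0) {t : ι → ℝ} (ht : t ≠ 0)
    (hF : ∑ i, t i • F (v i) = 0) : t p * t q * A (v p) (v q) < 0 := by
  classical
  obtain ⟨k, hk⟩ := Function.ne_iff.mp ht
  have hw : ∑ i, t i • Pi.single (v i) (1 : ℝ) ≠ 0 := fun h0 => hk <| by
    simpa [sum_smul_single_apply t hv] using congrFun h0 (v k)
  have hneg := h _ hw (by rw [sum_smul_single_vecMul, hF])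
  rw [sum_smul_single_dotProduct_mulVec, ← Fintype.sum_prod_type',
    Fintype.sum_eq_add (p, q) (q, p) (by simp [hpq]) ?_, hA.apply (v p) (v q)] at hneg
  · linarith
  · rintro ⟨i, j⟩ ⟨hij, hji⟩
    rw [hA0 i j ?_, mul_zero]
    rw [Ne, Sym2.eq_iff]
    rintro (⟨rfl, rfl⟩ | ⟨rfl, rfl⟩) <;> simp_all

theorem mul_det_submatrix_mul_det_submatrix_pos {F : Matrix n (Fin 3) ℝ}
    (h : NegDefOnLeftKer A F) (hA : A.IsSymm) {v : Fin 4 → n} (hv : v.Injective)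
    (hA0 : ∀ i j, s(i, j) ≠ s(2, 3) → A (v i) (v j) = 0) :
    0 < A (v 2) (v 3) * (F.submatrix ![v 0, v 1, v 2] id).det *
      (F.submatrix ![v 0, v 1, v 3] id).det := by
  have hD : (F.submatrix ![v 0, v 1, v 3] id).det ≠ 0 := by
    have e : ![v 0, v 1, v 3] = v ∘ ![0, 1, 3] := by ext i; fin_cases i <;> rfl
    rw [e]
    exact h.det_submatrix_ne_zero (hv.comp (by decide))
      (fun i j => hA0 _ _ (by fin_cases i <;> fin_cases j <;> decide))
  have := h.mul_neg_of_isotropic_off_pair hA hv (by decide) hA0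
    (t := ![(F.submatrix ![v 1, v 2, v 3] id).det, -(F.submatrix ![v 0, v 2, v 3] id).det,
      (F.submatrix ![v 0, v 1, v 3] id).det, -(F.submatrix ![v 0, v 1, v 2] id).det])
    (fun h0 => hD (by simpa using congrFun h0 2))
    (by simpa [Fin.sum_univ_four, sub_eq_add_neg] using
      det_submatrix_linear_relation F (v 0) (v 1) (v 2) (v 3))
  simp only [cons_val] at this
  nlinarith

end NegDefOnLeftKer

end Matrix

theorem paley17_adj_iff {x y : ZMod 17} :
    paley17.Adj x y ↔ x - y ∈ ({1, 2, 4, 8, 9, 13, 15, 16} : Finset (ZMod 17)) := by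
  have key : ∀ d : ZMod 17, (d ≠ 0 ∧ ∃ z : ZMod 17, z ≠ 0 ∧ d = z ^ 2) ↔
      d ∈ ({1, 2, 4, 8, 9, 13, 15, 16} : Finset (ZMod 17)) := by decide
  rw [← key, sub_ne_zero]
  rfl

instance : DecidableRel paley17.Adj := fun _ _ => decidable_of_iff' _ paley17_adj_iff

theorem paley17_adj_sub_right {x y : ZMod 17} (t : ZMod 17) :
    paley17.Adj (x - t) (y - t) ↔ paley17.Adj x y := by
  simp only [paley17_adj_iff, sub_sub_sub_cancel_right]

set_option synthInstance.maxSize 256 in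
theorem paley17_adj_of_four {a b c d : ZMod 17} (hab : a ≠ b) (hac : a ≠ c) (had : a ≠ d)
    (hbc : b ≠ c) (hbd : b ≠ d) (hcd : c ≠ d) :
    paley17.Adj a b ∨ paley17.Adj a c ∨ paley17.Adj a d ∨ paley17.Adj b c ∨ paley17.Adj b d ∨
      paley17.Adj c d := by
  suffices h : ∀ b c d : ZMod 17, 0 ≠ b → 0 ≠ c → 0 ≠ d → b ≠ c → b ≠ d → c ≠ d →
      paley17.Adj 0 b ∨ paley17.Adj 0 c ∨ paley17.Adj 0 d ∨ paley17.Adj b c ∨ paley17.Adj b d ∨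
        paley17.Adj c d by
    have := h (b - a) (c - a) (d - a) (by grind) (by grind) (by grind) (by grind) (by grind)
      (by grind)
    rwa [← sub_self a, paley17_adj_sub_right, paley17_adj_sub_right, paley17_adj_sub_right,
      paley17_adj_sub_right, paley17_adj_sub_right, paley17_adj_sub_right] at this
  decide

theorem paley17_card_le_three {s : Finset (ZMod 17)}
    (hs : ∀ i ∈ s, ∀ j ∈ s, ¬ paley17.Adj i j) : s.card ≤ 3 := by
  by_contra! h
  obtain ⟨a, ha⟩ : s.Nonempty := card_pos.mp (by omega)
  obtain ⟨b, c, d, hb, hc, hd, hbc, hbd, hcd⟩ :=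
    two_lt_card_iff.mp (by rw [card_erase_of_mem ha]; omega : 2 < (s.erase a).card)
  obtain ⟨hba, hb⟩ := mem_erase.mp hb
  obtain ⟨hca, hc⟩ := mem_erase.mp hc
  obtain ⟨hda, hd⟩ := mem_erase.mp hd
  rcases paley17_adj_of_four hba.symm hca.symm hda.symm hbc hbd hcd with h | h | h | h | h | h
  all_goals exact hs _ (by assumption) _ (by assumption) h

/-- Each `v` stands for the independent triples `{v 0, v 1, v 2}` and `{v 0, v 1, v 3}`, whose
remaining vertices `v 2` and `v 3` are adjacent. -/
def paley17SignCycle : List (Fin 4 → ZMod 17) :=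
  [![2, 8, 5, 13], ![5, 8, 2, 15], ![8, 13, 2, 3], ![2, 9, 12, 16], ![9, 12, 2, 15],
    ![2, 9, 14, 16], ![9, 14, 2, 3], ![6, 9, 3, 12], ![6, 9, 3, 16], ![3, 13, 8, 10],
    ![9, 14, 3, 4], ![9, 15, 3, 4], ![9, 15, 3, 12], ![10, 13, 3, 16], ![4, 9, 14, 16],
    ![4, 9, 15, 16], ![5, 15, 8, 10], ![5, 10, 15, 16], ![10, 16, 5, 13], ![6, 9, 12, 16]]

theorem paley17SignCycle_spec : ∀ v ∈ paley17SignCycle,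
    v.Injective ∧ ∀ i j, s(i, j) ≠ s(2, 3) → ¬ paley17.Adj (v i) (v j) := by
  simp only [paley17SignCycle, List.forall_mem_cons, List.not_mem_nil, IsEmpty.forall_iff,
    implies_true, and_true]
  and_intros <;> decide

theorem paley17_not_negDefOnLeftKer {A : Matrix (ZMod 17) (ZMod 17) ℝ} (hA : A.IsSymm)
    (hA0 : ∀ x y, ¬ paley17.Adj x y → A x y = 0) (F : Matrix (ZMod 17) (Fin 3) ℝ) :
    ¬ NegDefOnLeftKer A F := by
  intro h
  have hpos := List.prod_pos (s := paley17SignCycle.map fun v =>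
      A (v 2) (v 3) * (F.submatrix ![v 0, v 1, v 2] id).det *
        (F.submatrix ![v 0, v 1, v 3] id).det) <| by
    simp only [List.mem_map]
    rintro _ ⟨v, hv, rfl⟩
    obtain ⟨hinj, hind⟩ := paley17SignCycle_spec v hv
    exact h.mul_det_submatrix_mul_det_submatrix_pos hA hinj fun i j hij => hA0 _ _ (hind i j hij)
  simp only [paley17SignCycle, List.map_cons, List.map_nil, List.prod_cons, List.prod_nil,
    Matrix.cons_val] at hpos
  -- Sort the rows of every determinant, so that equal determinants become equal terms.
  simp (disch := decide) only [
    fun a b c (_ : b.val < a.val) => det_submatrix_swap_zero_one F a b c,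
    fun a b c (_ : c.val < b.val) => det_submatrix_swap_one_two F a b c] at hpos
  refine hpos.not_ge ?_
  ring_nf
  exact neg_nonpos.mpr (by positivity)

/-- **Sinkovic's theorem.** The Paley graph `G` on 17 vertices has independence number `3`,
but every symmetric weighted adjacency matrix of `G` has at least `4` non-negative
eigenvalues (counted with multiplicity). -/
theorem sinkovic_paley17 :
    ((∃ s : Finset (ZMod 17), (∀ i ∈ s, ∀ j ∈ s, ¬ paley17.Adj i j) ∧ s.card = 3) ∧
      ∀ s : Finset (ZMod 17), (∀ i ∈ s, ∀ j ∈ s, ¬ paley17.Adj i j) → s.card ≤ 3) ∧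
    ∀ (A : Matrix (ZMod 17) (ZMod 17) ℝ) (hA : A.IsHermitian),
      (∀ x y, ¬ paley17.Adj x y → A x y = 0) →
      4 ≤ Fintype.card {i : ZMod 17 // 0 ≤ hA.eigenvalues i} := by
  refine ⟨⟨⟨{0, 3, 6}, by decide, by decide⟩, fun s hs => paley17_card_le_three hs⟩,
    fun A hA hA0 => ?_⟩
  by_contra! hcard
  have h := hA.negDefOnLeftKer_nonnegEigenvectors
  have h3 := h.card_le (v := ![(0 : ZMod 17), 3, 6]) (by decide)
    fun i j => hA0 _ _ (by revert i j; decide)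
  rw [Fintype.card_fin] at h3
  exact paley17_not_negDefOnLeftKer (isHermitian_iff_isSymm.mp hA) hA0 _
    (h.submatrix_equiv (Fintype.equivFinOfCardEq (by omega)).symm)
end

section
/- Let Y be a real-valued random variable on a probability space with E[Y⁴] < ∞, and let y > 0 be a real number. Then P(Y ≥ 0) ≤ 1 − (4/9)(2√3 − 3)(−2E[Y]/y + 3E[Y²]/y² − E[Y⁴]/y⁴). -/
/-!
The polynomial `p(t) = 1 - (4/9)(2√3 - 3)(-2t + 3t² - t⁴)` dominates the indicator of
`[0, ∞)`: on `[0, ∞)` we have `p(t) - 1 = (4/9)(2√3 - 3) t (t - 1)² (t + 2) ≥ 0`, and everywhere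
`p` is `(2√3 - 3)/9` times a square times a quadratic without real roots. Hence
`P(Y ≥ 0) ≤ P(p(Y/y) ≥ 1) ≤ E[p(Y/y)]` by Markov's inequality, and the right-hand side is the
claimed combination of moments.
-/

open MeasureTheory

noncomputable def hzzPoly (t : ℝ) : ℝ :=
  1 - 4 / 9 * (2 * √3 - 3) * (-(2 * t) + 3 * t ^ 2 - t ^ 4)

lemma three_halves_lt_sqrt_three : 3 / 2 < √3 := by
  rw [Real.lt_sqrt (by norm_num)]; norm_num

/- The constant `2√3 - 3` is the largest one for which `hzzPoly` stays nonnegative: it makes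
`-(1 + √3)/2` a double root. -/
lemma hzzPoly_eq_mul_sq (t : ℝ) :
    hzzPoly t =
      (2 * √3 - 3) / 9 * (2 * t + 1 + √3) ^ 2 * ((t - (1 + √3) / 2) ^ 2 + (√3 - 1)) := by
  have h3 : √3 ^ 2 = 3 := Real.sq_sqrt (by norm_num)
  unfold hzzPoly
  linear_combination (-1/18 * √3 ^ 3 - 13/36 * √3 ^ 2 + 4/9 * t ^ 2 * √3 - 8/9 * t * √3
    - 1/18 * √3 - 2/3 * t ^ 2 + 4/3 * t - 1/4) * h3

lemma hzzPoly_nonneg (t : ℝ) : 0 ≤ hzzPoly t := by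
  have := three_halves_lt_sqrt_three
  have hc : 0 ≤ (2 * √3 - 3) / 9 := by linarith
  have hq : 0 ≤ (t - (1 + √3) / 2) ^ 2 + (√3 - 1) := by
    nlinarith [sq_nonneg (t - (1 + √3) / 2)]
  rw [hzzPoly_eq_mul_sq]
  positivity

lemma one_le_hzzPoly {t : ℝ} (ht : 0 ≤ t) : 1 ≤ hzzPoly t := by
  have := three_halves_lt_sqrt_three
  have hc : 0 ≤ 4 / 9 * (2 * √3 - 3) := by linarith
  have h : 0 ≤ 4 / 9 * (2 * √3 - 3) * (t * (t - 1) ^ 2 * (t + 2)) := by positivity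
  unfold hzzPoly
  linarith [show t * (t - 1) ^ 2 * (t + 2) = -(-(2 * t) + 3 * t ^ 2 - t ^ 4) by ring]

lemma hzzPoly_div (t y : ℝ) :
    hzzPoly (t / y) =
      1 - 4 / 9 * (2 * √3 - 3) * ((-2 / y) * t + (3 / y ^ 2) * t ^ 2 - (1 / y ^ 4) * t ^ 4) := by
  unfold hzzPoly
  ring

lemma integrable_pow_of_le_of_even {Ω : Type*} [MeasurableSpace Ω] {μ : Measure Ω}
    [IsFiniteMeasure μ] {Y : Ω → ℝ} (hY : AEStronglyMeasurable Y μ) {k n : ℕ} (hkn : k ≤ n)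
    (hn : Even n) (h : Integrable (fun ω => Y ω ^ n) μ) : Integrable (fun ω => Y ω ^ k) μ := by
  have habs : Integrable (fun ω => ‖Y ω‖ ^ k) μ :=
    integrable_norm_pow_of_le hY hkn (by simpa only [Real.norm_eq_abs, hn.pow_abs] using h)
  exact (integrable_norm_iff (f := fun ω => Y ω ^ k) (hY.pow k)).1
    (by simpa only [norm_pow] using habs)

section Moments

variable {Ω : Type*} [MeasurableSpace Ω] {μ : Measure Ω} [IsProbabilityMeasure μ]
  {Y : Ω → ℝ}

lemma integrable_hzzPoly_div (hY : AEStronglyMeasurable Y μ)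
    (hY4 : Integrable (fun ω => Y ω ^ 4) μ) (y : ℝ) :
    Integrable (fun ω => hzzPoly (Y ω / y)) μ := by
  have hY1 := integrable_pow_of_le_of_even hY (k := 1) (by norm_num) (by decide) hY4
  have hY2 := integrable_pow_of_le_of_even hY (k := 2) (by norm_num) (by decide) hY4
  simp only [pow_one] at hY1
  simp_rw [hzzPoly_div]
  exact (integrable_const 1).sub
    ((((hY1.const_mul _).add (hY2.const_mul _)).sub (hY4.const_mul _)).const_mul _)

lemma integral_hzzPoly_div (hY : AEStronglyMeasurable Y μ)
    (hY4 : Integrable (fun ω => Y ω ^ 4) μ) (y : ℝ) :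
    ∫ ω, hzzPoly (Y ω / y) ∂μ =
      1 - (4 / 9) * (2 * √3 - 3) *
        (-(2 * (∫ ω, Y ω ∂μ)) / y + 3 * (∫ ω, (Y ω) ^ 2 ∂μ) / y ^ 2
          - (∫ ω, (Y ω) ^ 4 ∂μ) / y ^ 4) := by
  have hY1 := integrable_pow_of_le_of_even hY (k := 1) (by norm_num) (by decide) hY4
  have hY2 := integrable_pow_of_le_of_even hY (k := 2) (by norm_num) (by decide) hY4
  simp only [pow_one] at hY1
  have hY12 : Integrable (fun ω => (-2 / y) * Y ω + (3 / y ^ 2) * Y ω ^ 2) μ :=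
    (hY1.const_mul _).add (hY2.const_mul _)
  have hY124 : Integrable
      (fun ω => (-2 / y) * Y ω + (3 / y ^ 2) * Y ω ^ 2 - (1 / y ^ 4) * Y ω ^ 4) μ :=
    hY12.sub (hY4.const_mul _)
  simp_rw [hzzPoly_div]
  rw [integral_sub (integrable_const _) (hY124.const_mul _), integral_const_mul,
    integral_sub hY12 (hY4.const_mul _), integral_add (hY1.const_mul _) (hY2.const_mul _),
    integral_const_mul, integral_const_mul, integral_const_mul]
  simp only [integral_const, probReal_univ, smul_eq_mul, mul_one]
  ring

end Moments

/-- **He–Zhang–Zhang inequality.** For a real random variable `Y` with finite fourth moment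
and any `y > 0`,
`P(Y ≥ 0) ≤ 1 - (4/9)(2√3 - 3)(-2E[Y]/y + 3E[Y²]/y² - E[Y⁴]/y⁴)`. -/
theorem hzz_inequality {Ω : Type*} [MeasurableSpace Ω] (μ : Measure Ω) [IsProbabilityMeasure μ]
    (Y : Ω → ℝ) (hY : Measurable Y) (hY4 : Integrable (fun ω => (Y ω) ^ 4) μ)
    (y : ℝ) (hy : 0 < y) :
    (μ {ω | 0 ≤ Y ω}).toReal ≤
      1 - (4 / 9) * (2 * Real.sqrt 3 - 3) *
        (-(2 * (∫ ω, Y ω ∂μ)) / y + 3 * (∫ ω, (Y ω) ^ 2 ∂μ) / y ^ 2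
          - (∫ ω, (Y ω) ^ 4 ∂μ) / y ^ 4) := by
  have hYm := hY.aestronglyMeasurable (μ := μ)
  calc μ.real {ω | 0 ≤ Y ω}
      ≤ μ.real {ω | 1 ≤ hzzPoly (Y ω / y)} :=
        measureReal_mono fun ω hω => one_le_hzzPoly (div_nonneg hω hy.le)
    _ ≤ ∫ ω, hzzPoly (Y ω / y) ∂μ := by
        simpa using mul_meas_ge_le_integral_of_nonneg
          (ae_of_all _ fun ω => hzzPoly_nonneg _) (integrable_hzzPoly_div hYm hY4 y) 1
    _ = _ := integral_hzzPoly_div hYm hY4 y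
end

section
/- Let X be a real-valued random variable on a probability space with E[X⁴] < ∞, satisfying E[X] = 0, E[X²] = 1, and E[X⁴] ≤ 2. Then P(X > 0) ≥ β, where β = √3 − 3/2. -/
/-!
The quartic `q x = 4 x² - x⁴ + (16√3/9) x` is nonpositive on `(-∞, 0]` and is bounded above by
`M = 4 + 8√3/3`, its maximum being attained at `x = 1 + √3/3`; hence `q ≤ M · 𝟙_{(0,∞)}`.
Taking expectations, `2 ≤ 4 - E[X⁴] = E[q(X)] ≤ M · P(X > 0)`, and `2 / M = √3 - 3/2`.
The coefficient `16√3/9 = max_{y ≥ 0} (4y - y³)` is the least one keeping `q ≤ 0` on `(-∞, 0]`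
(it creates a double root at `-2√3/3`); a larger one would only increase `M`.
-/

open MeasureTheory Set

noncomputable def anticoncentrationQuartic (x : ℝ) : ℝ :=
  4 * x ^ 2 - x ^ 4 + 16 * √3 / 9 * x

lemma anticoncentrationQuartic_nonpos {x : ℝ} (hx : x ≤ 0) : anticoncentrationQuartic x ≤ 0 := by
  have h3 : √3 ^ 2 = 3 := Real.sq_sqrt (by norm_num)
  have hfactor : anticoncentrationQuartic x = x * (x + 2 * √3 / 3) ^ 2 * (4 * √3 / 3 - x) := by
    unfold anticoncentrationQuartic
    linear_combination (-(4 / 3) * x ^ 2 - 16 / 27 * √3 * x) * h3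
  rw [hfactor]
  exact mul_nonpos_of_nonpos_of_nonneg (mul_nonpos_of_nonpos_of_nonneg hx (sq_nonneg _))
    (by linarith [Real.sqrt_nonneg 3])

lemma anticoncentrationQuartic_le (x : ℝ) : anticoncentrationQuartic x ≤ 4 + 8 * √3 / 3 := by
  have h3 : √3 ^ 2 = 3 := Real.sq_sqrt (by norm_num)
  have h1 : 1 ≤ √3 := Real.one_le_sqrt.2 (by norm_num)
  have hfactor : 4 + 8 * √3 / 3 - anticoncentrationQuartic x
      = (x - (1 + √3 / 3)) ^ 2 * ((x + (1 + √3 / 3)) ^ 2 + (4 * √3 - 4) / 3) := by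
    unfold anticoncentrationQuartic
    linear_combination (2 / 9 * x ^ 2 + 8 / 9 * x - √3 ^ 2 / 81 - 8 * √3 / 27 - 13 / 9) * h3
  have : 0 ≤ (x - (1 + √3 / 3)) ^ 2 * ((x + (1 + √3 / 3)) ^ 2 + (4 * √3 - 4) / 3) :=
    mul_nonneg (sq_nonneg _) (add_nonneg (sq_nonneg _) (by linarith))
  linarith

lemma anticoncentrationQuartic_le_indicator (x : ℝ) :
    anticoncentrationQuartic x ≤ (Ioi 0).indicator (fun _ ↦ 4 + 8 * √3 / 3) x := by
  by_cases hx : 0 < x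
  · rw [indicator_of_mem (show x ∈ Ioi 0 from hx)]
    exact anticoncentrationQuartic_le x
  · rw [indicator_of_notMem (show x ∉ Ioi 0 from hx)]
    exact anticoncentrationQuartic_nonpos (not_lt.1 hx)

section Integrals

variable {Ω : Type*} [MeasurableSpace Ω] {μ : Measure Ω}

lemma integral_le_measureReal_mul_of_le_indicator [IsFiniteMeasure μ] {g : Ω → ℝ} {T : Set Ω}
    {M : ℝ} (hT : MeasurableSet T) (hg : Integrable g μ)
    (hle : ∀ ω, g ω ≤ T.indicator (fun _ ↦ M) ω) :
    ∫ ω, g ω ∂μ ≤ μ.real T * M :=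
  calc ∫ ω, g ω ∂μ ≤ ∫ ω, T.indicator (fun _ ↦ M) ω ∂μ :=
        integral_mono hg ((integrable_const M).indicator hT) hle
    _ = μ.real T * M := integral_indicator_const M hT

lemma MeasureTheory.Integrable.pow_of_le_of_even [IsFiniteMeasure μ] {f : Ω → ℝ}
    (hf : AEStronglyMeasurable f μ) {p q : ℕ} (hpq : p ≤ q) (hq : Even q)
    (hint : Integrable (fun ω ↦ f ω ^ q) μ) :
    Integrable (fun ω ↦ f ω ^ p) μ := by
  have hnorm : Integrable (fun ω ↦ ‖f ω‖ ^ p) μ :=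
    integrable_norm_pow_of_le hf hpq (by simpa only [Real.norm_eq_abs, hq.pow_abs] using hint)
  exact hnorm.mono' (hf.pow p) (ae_of_all _ fun ω ↦ (norm_pow _ _).le)

lemma integrable_anticoncentrationQuartic_comp {X : Ω → ℝ} (hX1 : Integrable X μ)
    (hX2 : Integrable (fun ω ↦ X ω ^ 2) μ) (hX4 : Integrable (fun ω ↦ X ω ^ 4) μ) :
    Integrable (fun ω ↦ anticoncentrationQuartic (X ω)) μ :=
  ((hX2.const_mul 4).sub hX4).add (hX1.const_mul _)

lemma integral_anticoncentrationQuartic_comp {X : Ω → ℝ} (hX1 : Integrable X μ)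
    (hX2 : Integrable (fun ω ↦ X ω ^ 2) μ) (hX4 : Integrable (fun ω ↦ X ω ^ 4) μ) :
    ∫ ω, anticoncentrationQuartic (X ω) ∂μ
      = 4 * ∫ ω, X ω ^ 2 ∂μ - ∫ ω, X ω ^ 4 ∂μ + 16 * √3 / 9 * ∫ ω, X ω ∂μ := by
  unfold anticoncentrationQuartic
  rw [integral_add (f := fun ω ↦ 4 * X ω ^ 2 - X ω ^ 4) ((hX2.const_mul 4).sub hX4)
      (hX1.const_mul _), integral_sub (hX2.const_mul 4) hX4, integral_const_mul, integral_const_mul]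

end Integrals

/-- If `X` is a real random variable with `E[X] = 0`, `E[X²] = 1` and `E[X⁴] ≤ 2`, then
`P(X > 0) ≥ β` where `β = √3 - 3/2`. -/
theorem anticoncentration_fourth_moment {Ω : Type*} [MeasurableSpace Ω] (μ : Measure Ω)
    [IsProbabilityMeasure μ]
    (X : Ω → ℝ) (hX : Measurable X) (hX4 : Integrable (fun ω => (X ω) ^ 4) μ)
    (h1 : (∫ ω, X ω ∂μ) = 0) (h2 : (∫ ω, (X ω) ^ 2 ∂μ) = 1)
    (h4 : (∫ ω, (X ω) ^ 4 ∂μ) ≤ 2) :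
    Real.sqrt 3 - 3 / 2 ≤ (μ {ω | 0 < X ω}).toReal := by
  have hX1 : Integrable X μ := by
    simpa only [pow_one] using
      hX4.pow_of_le_of_even hX.aestronglyMeasurable (p := 1) (by norm_num) (by decide)
  have hX2 : Integrable (fun ω ↦ X ω ^ 2) μ :=
    hX4.pow_of_le_of_even hX.aestronglyMeasurable (by norm_num) (by decide)
  have hbound := integral_le_measureReal_mul_of_le_indicator (measurableSet_lt measurable_const hX)
    (integrable_anticoncentrationQuartic_comp hX1 hX2 hX4)
    (fun ω ↦ anticoncentrationQuartic_le_indicator (X ω))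
  rw [integral_anticoncentrationQuartic_comp hX1 hX2 hX4, h1, h2] at hbound
  have hM : 0 < 4 + 8 * √3 / 3 := by positivity
  refine le_of_mul_le_mul_right ?_ hM
  calc (√3 - 3 / 2) * (4 + 8 * √3 / 3) = 2 := by
        linear_combination (8 / 3 : ℝ) * Real.sq_sqrt (show (0 : ℝ) ≤ 3 by norm_num)
    _ ≤ 4 * 1 - ∫ ω, X ω ^ 4 ∂μ + 16 * √3 / 9 * 0 := by linarith
    _ ≤ _ := hbound
end

section
/- Let X be a real-valued random variable on a probability space with E[X⁴] < ∞, satisfying E[X] = 0, E[X²] = 1, E[X³] = 0, and E[X⁴] ≤ 2. Then P(X > 0) ≥ 1/4. -/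
/-!
The quartic `p x = 3√2 x + 4 x² - (√2/2) x³ - x⁴` lies below `8 · 𝟙(x > 0)`, touching it at `0`
and `±√2`, the support of the extremal law `¼ δ_{-√2} + ½ δ_0 + ¼ δ_{√2}`. Taking expectations,
`8 P(X > 0) ≥ E[p X] = 4 - E[X⁴] ≥ 2`.
-/

open MeasureTheory Real

lemma integrable_pow_of_le_of_even_s10 {Ω : Type*} [MeasurableSpace Ω] {μ : Measure Ω}
    [IsFiniteMeasure μ] {X : Ω → ℝ} (hX : AEStronglyMeasurable X μ) {p q : ℕ} (hpq : p ≤ q)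
    (hq : Even q) (hint : Integrable (fun ω => X ω ^ q) μ) :
    Integrable (fun ω => X ω ^ p) μ := by
  have hnorm : Integrable (fun ω => ‖X ω‖ ^ p) μ :=
    integrable_norm_pow_of_le hX hpq (by simpa only [Real.norm_eq_abs, hq.pow_abs] using hint)
  refine (integrable_norm_iff (hX.pow p)).1 ?_
  simpa only [Pi.pow_apply, norm_pow] using hnorm

lemma integral_comp_le_measureReal_preimage_mul {Ω α : Type*} [MeasurableSpace Ω]
    [MeasurableSpace α] {μ : Measure Ω} [IsFiniteMeasure μ] {X : Ω → α} (hX : Measurable X)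
    {f : α → ℝ} {s : Set α} {c : ℝ} (hs : MeasurableSet s)
    (hf : Integrable (fun ω => f (X ω)) μ) (hle : ∀ x, f x ≤ s.indicator (fun _ => c) x) :
    ∫ ω, f (X ω) ∂μ ≤ μ.real (X ⁻¹' s) * c := by
  have hXs : MeasurableSet (X ⁻¹' s) := hX hs
  calc ∫ ω, f (X ω) ∂μ ≤ ∫ ω, (X ⁻¹' s).indicator (fun _ => c) ω ∂μ :=
        integral_mono hf ((integrable_const c).indicator hXs) fun ω => hle (X ω)
    _ = μ.real (X ⁻¹' s) * c := integral_indicator_const c hXs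

noncomputable def quarticCertificate (x : ℝ) : ℝ :=
  3 * √2 * x + 4 * x ^ 2 - √2 / 2 * x ^ 3 - x ^ 4

lemma quarticCertificate_le_eight {x : ℝ} (hx : 0 < x) : quarticCertificate x ≤ 8 := by
  have hfactor : 8 - quarticCertificate x = (x - √2) ^ 2 * (x ^ 2 + 5 * √2 / 2 * x + 4) := by
    unfold quarticCertificate
    linear_combination (4 * x ^ 2 - 5 * √2 / 2 * x - 4) * sq_sqrt zero_le_two
  have : 0 ≤ (x - √2) ^ 2 * (x ^ 2 + 5 * √2 / 2 * x + 4) := by positivity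
  linarith

lemma quarticCertificate_nonpos {x : ℝ} (hx : x ≤ 0) : quarticCertificate x ≤ 0 := by
  have hfactor : -quarticCertificate x = (-x) * (x + √2) ^ 2 * (3 * √2 / 2 - x) := by
    unfold quarticCertificate
    linear_combination (2 * x ^ 2 + 3 * √2 / 2 * x) * sq_sqrt zero_le_two
  have : 0 ≤ 3 * √2 / 2 - x := by linarith [sqrt_nonneg 2]
  have : 0 ≤ -x := by linarith
  have : 0 ≤ (-x) * (x + √2) ^ 2 * (3 * √2 / 2 - x) := by positivity
  linarith

lemma quarticCertificate_le_indicator (x : ℝ) :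
    quarticCertificate x ≤ (Set.Ioi 0).indicator (fun _ => 8) x := by
  by_cases hx : 0 < x
  · rw [Set.indicator_of_mem (Set.mem_Ioi.2 hx)]
    exact quarticCertificate_le_eight hx
  · rw [Set.indicator_of_notMem (mt Set.mem_Ioi.1 hx)]
    exact quarticCertificate_nonpos (not_lt.1 hx)

lemma integrable_quarticCertificate_comp_and_integral_eq {Ω : Type*} [MeasurableSpace Ω]
    {μ : Measure Ω} [IsFiniteMeasure μ] {X : Ω → ℝ} (hX : AEStronglyMeasurable X μ)
    (hX4 : Integrable (fun ω => X ω ^ 4) μ) :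
    Integrable (fun ω => quarticCertificate (X ω)) μ ∧
      ∫ ω, quarticCertificate (X ω) ∂μ = 3 * √2 * (∫ ω, X ω ∂μ) + 4 * (∫ ω, X ω ^ 2 ∂μ)
        - √2 / 2 * (∫ ω, X ω ^ 3 ∂μ) - ∫ ω, X ω ^ 4 ∂μ := by
  have hpow {k : ℕ} (hk : k ≤ 4) : Integrable (fun ω => X ω ^ k) μ :=
    integrable_pow_of_le_of_even_s10 hX hk (by decide) hX4
  have hI1 : Integrable (fun ω => 3 * √2 * X ω) μ := by
    simpa only [pow_one] using (hpow (k := 1) (by norm_num)).const_mul (3 * √2)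
  have hI2 : Integrable (fun ω => 4 * X ω ^ 2) μ := (hpow (by norm_num)).const_mul 4
  have hI3 : Integrable (fun ω => √2 / 2 * X ω ^ 3) μ := (hpow (by norm_num)).const_mul _
  have hI12 : Integrable (fun ω => 3 * √2 * X ω + 4 * X ω ^ 2) μ := hI1.add hI2
  have hI123 : Integrable (fun ω => 3 * √2 * X ω + 4 * X ω ^ 2 - √2 / 2 * X ω ^ 3) μ :=
    hI12.sub hI3
  refine ⟨hI123.sub hX4, ?_⟩
  unfold quarticCertificate
  rw [integral_sub hI123 hX4, integral_sub hI12 hI3, integral_add hI1 hI2, integral_const_mul,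
    integral_const_mul, integral_const_mul]

/-- If `X` is a real random variable with `E[X] = 0`, `E[X²] = 1`, `E[X³] = 0` and
`E[X⁴] ≤ 2`, then `P(X > 0) ≥ 1/4`. -/
theorem anticoncentration_fourth_moment_symmetric {Ω : Type*} [MeasurableSpace Ω]
    (μ : Measure Ω) [IsProbabilityMeasure μ]
    (X : Ω → ℝ) (hX : Measurable X) (hX4 : Integrable (fun ω => (X ω) ^ 4) μ)
    (h1 : (∫ ω, X ω ∂μ) = 0) (h2 : (∫ ω, (X ω) ^ 2 ∂μ) = 1)
    (h3 : (∫ ω, (X ω) ^ 3 ∂μ) = 0) (h4 : (∫ ω, (X ω) ^ 4 ∂μ) ≤ 2) :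
    1 / 4 ≤ (μ {ω | 0 < X ω}).toReal := by
  obtain ⟨hint, hmoments⟩ :=
    integrable_quarticCertificate_comp_and_integral_eq hX.aestronglyMeasurable hX4
  have hbound := integral_comp_le_measureReal_preimage_mul hX measurableSet_Ioi hint
    quarticCertificate_le_indicator
  rw [hmoments, h1, h2, h3] at hbound
  change 1 / 4 ≤ μ.real (X ⁻¹' Set.Ioi 0)
  linarith
end

section
/- Let M be a symmetric n×n real matrix with non-negative entries. Suppose that for all non-empty subsets S, T ⊆ {1,…,n} such that M_{st} = 0 for every s ∈ S and t ∈ T, one has |S| + |T| < n. Then there exists a diagonal matrix D with strictly positive diagonal entries such that DMD is doubly stochastic. -/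
/-!
Minimize the potential `G(u) = ∑ₖₗ Mₖₗ exp (uₖ + uₗ)` on the hyperplane `∑ₖ uₖ = 0`. At a
minimizer the derivative of `G` in every direction of the hyperplane vanishes, which by symmetry
of `M` says that the row weights `exp uₖ · (M exp u)ₖ` all share one value `μ > 0`; then
`dₖ = exp uₖ / √μ` is the required scaling.

The minimum exists because the sublevel sets of `G` on the hyperplane are bounded: `G(u) ≤ c`
forces `uₖ + uₗ ≤ log (c / Mₖₗ)` wherever `Mₖₗ > 0`, so pairs of index sets on which `u` is
pairwise large span a zero block, and the no-large-zero-block hypothesis applied to the sorted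
coordinates of `u` bounds the largest coordinate.
-/

open Matrix Finset

def IsDoublyStochastic {n : ℕ} (B : Matrix (Fin n) (Fin n) ℝ) : Prop :=
  (∀ i j, 0 ≤ B i j) ∧ (∀ i, ∑ j, B i j = 1) ∧ (∀ j, ∑ i, B i j = 1)

open Real

theorem last_le_of_add_le_of_sum_nonneg {m : ℕ} {L : ℝ} (w : Fin (m + 1) → ℝ)
    (hsum : 0 ≤ ∑ k, w k) (hpair : ∀ k l : Fin (m + 1), (k : ℕ) + l ≤ m + 1 → w k + w l ≤ L) :
    w (Fin.last m) ≤ (m + 2) * L / 2 := by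
  have hreflect : ∑ k : Fin m, w k.succ = ∑ k : Fin m, w k.rev.succ :=
    (Fintype.sum_equiv Fin.revPerm _ _ fun _ => rfl).symm
  have htail : 2 * ∑ k : Fin m, w k.succ ≤ m * L :=
    calc 2 * ∑ k : Fin m, w k.succ = ∑ k : Fin m, (w k.succ + w k.rev.succ) := by
          rw [sum_add_distrib, ← hreflect]; ring
      _ ≤ ∑ _k : Fin m, L := sum_le_sum fun k _ => hpair _ _ (by simp; omega)
      _ = m * L := by simp
  have hends := hpair 0 (Fin.last m) (by simp)
  rw [Fin.sum_univ_succ] at hsum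
  linarith

theorem le_of_sum_nonneg_of_no_large_block {m : ℕ} {L : ℝ} (v : Fin (m + 1) → ℝ)
    (hsum : 0 ≤ ∑ k, v k)
    (hblock : ∀ S T : Finset (Fin (m + 1)), S.Nonempty → T.Nonempty →
      (∀ s ∈ S, ∀ t ∈ T, L < v s + v t) → S.card + T.card < m + 1)
    (i : Fin (m + 1)) :
    v i ≤ (m + 2) * L / 2 := by
  set σ := Tuple.sort v
  have hmono : Monotone (v ∘ σ) := Tuple.monotone_sort v
  -- Otherwise the `m + 1 - k` and `m + 1 - l` largest values of `v` form a forbidden block.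
  have hpair : ∀ k l : Fin (m + 1), (k : ℕ) + l ≤ m + 1 → v (σ k) + v (σ l) ≤ L := by
    intro k l hkl
    by_contra! hlt
    have hcard := hblock ((Ici k).map σ.toEmbedding) ((Ici l).map σ.toEmbedding)
      (by simp) (by simp) fun s hs t ht => by
        simp only [mem_map_equiv, mem_Ici] at hs ht
        have hs' : v (σ k) ≤ v s := by simpa using hmono hs
        have ht' : v (σ l) ≤ v t := by simpa using hmono ht
        linarith
    simp only [card_map, Fin.card_Ici] at hcard
    omega
  have hlast := last_le_of_add_le_of_sum_nonneg (v ∘ σ)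
    (by rwa [Function.comp_def, Equiv.sum_comp σ v]) hpair
  calc v i = v (σ (σ.symm i)) := by rw [Equiv.apply_symm_apply]
    _ ≤ v (σ (Fin.last m)) := hmono (Fin.le_last _)
    _ ≤ _ := hlast

theorem exists_pos_of_no_large_zero_block {n : ℕ} {M : Matrix (Fin n) (Fin n) ℝ}
    (hpos : ∀ i j, 0 ≤ M i j)
    (hblock : ∀ S T : Finset (Fin n), S.Nonempty → T.Nonempty →
      (∀ s ∈ S, ∀ t ∈ T, M s t = 0) → S.card + T.card < n)
    (i : Fin n) : ∃ j, 0 < M i j := by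
  by_contra! hrow
  have hcard := hblock {i} univ (singleton_nonempty i) ⟨i, mem_univ i⟩
    fun s hs t _ => by rw [mem_singleton.1 hs]; exact (hrow t).antisymm (hpos i t)
  simp at hcard

section Potential

variable {ι : Type*} [Fintype ι]

noncomputable def scalingPotential (M : Matrix ι ι ℝ) (u : ι → ℝ) : ℝ :=
  ∑ k, ∑ l, M k l * exp (u k + u l)

theorem continuous_scalingPotential (M : Matrix ι ι ℝ) : Continuous (scalingPotential M) := by
  unfold scalingPotential
  fun_prop

theorem add_le_log_of_scalingPotential_le {M : Matrix ι ι ℝ} (hpos : ∀ i j, 0 ≤ M i j)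
    {u : ι → ℝ} {c : ℝ} (hu : scalingPotential M u ≤ c) {k l : ι} (hkl : 0 < M k l) :
    u k + u l ≤ log (c / M k l) := by
  have hnonneg : ∀ i j, 0 ≤ M i j * exp (u i + u j) := fun i j =>
    mul_nonneg (hpos i j) (exp_pos _).le
  have hterm : M k l * exp (u k + u l) ≤ c :=
    ((single_le_sum (fun j _ => hnonneg k j) (mem_univ l)).trans
      (single_le_sum (fun i _ => sum_nonneg fun j _ => hnonneg i j) (mem_univ k))).trans hu
  have hexp : exp (u k + u l) ≤ c / M k l := by rwa [le_div_iff₀' hkl]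
  rwa [le_log_iff_exp_le ((exp_pos _).trans_le hexp)]

theorem sub_card_mul_le_of_sum_eq_zero {u : ι → ℝ} {B : ℝ} (hsum : ∑ k, u k = 0)
    (hle : ∀ k, u k ≤ B) (i : ι) : B - Fintype.card ι * B ≤ u i := by
  have h : B - u i ≤ ∑ k, (B - u k) :=
    single_le_sum (fun k _ => sub_nonneg.2 (hle k)) (mem_univ i)
  simp only [sum_sub_distrib, sum_const, card_univ, nsmul_eq_mul, hsum] at h
  linarith

theorem hasDerivAt_scalingPotential_line (M : Matrix ι ι ℝ) (u c : ι → ℝ) :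
    HasDerivAt (fun t : ℝ => scalingPotential M (u + t • c))
      (∑ k, ∑ l, M k l * exp (u k + u l) * (c k + c l)) 0 := by
  have hcurve : HasDerivAt (fun t : ℝ => u + t • c) c 0 := by
    simpa using ((hasDerivAt_id (0 : ℝ)).smul_const c).const_add u
  refine HasDerivAt.fun_sum fun k _ => HasDerivAt.fun_sum fun l _ => ?_
  have h := ((hasDerivAt_pi.1 hcurve k).add (hasDerivAt_pi.1 hcurve l)).exp.const_mul (M k l)
  simpa [mul_assoc] using h

theorem sum_mul_add_eq_of_isSymm {M : Matrix ι ι ℝ} (hsymm : M.IsSymm) (u c : ι → ℝ) :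
    ∑ k, ∑ l, M k l * exp (u k + u l) * (c k + c l)
      = 2 * ∑ k, c k * ∑ l, M k l * exp (u k + u l) := by
  have hswap : ∑ k, ∑ l, M k l * exp (u k + u l) * c l
      = ∑ k, ∑ l, M k l * exp (u k + u l) * c k := by
    rw [sum_comm]
    refine sum_congr rfl fun k _ => sum_congr rfl fun l _ => ?_
    rw [hsymm.apply k l, add_comm]
  simp only [mul_add, sum_add_distrib, hswap, mul_sum, ← two_mul]
  simp only [mul_comm (c _)]

theorem row_weight_eq_of_isMinOn [DecidableEq ι] {M : Matrix ι ι ℝ} (hsymm : M.IsSymm)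
    {u : ι → ℝ} (hmin : IsMinOn (scalingPotential M) {w | ∑ k, w k = ∑ k, u k} u) (i j : ι) :
    ∑ l, M i l * exp (u i + u l) = ∑ l, M j l * exp (u j + u l) := by
  set c : ι → ℝ := Pi.single i 1 - Pi.single j 1
  have hline : IsLocalMin (fun t : ℝ => scalingPotential M (u + t • c)) 0 :=
    Filter.Eventually.of_forall fun t => by
      simpa using hmin (by simp [c, sum_add_distrib, ← mul_sum, sum_sub_distrib])
  have hderiv := hline.hasDerivAt_eq_zero (hasDerivAt_scalingPotential_line M u c)
  rw [sum_mul_add_eq_of_isSymm hsymm] at hderiv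
  simpa [c, Pi.single_apply, sub_mul, sum_sub_distrib, sub_eq_zero] using hderiv

end Potential

theorem isCompact_scalingPotential_sublevel {m : ℕ} {M : Matrix (Fin (m + 1)) (Fin (m + 1)) ℝ}
    (hpos : ∀ i j, 0 ≤ M i j)
    (hblock : ∀ S T : Finset (Fin (m + 1)), S.Nonempty → T.Nonempty →
      (∀ s ∈ S, ∀ t ∈ T, M s t = 0) → S.card + T.card < m + 1)
    (c : ℝ) : IsCompact {u : Fin (m + 1) → ℝ | ∑ k, u k = 0 ∧ scalingPotential M u ≤ c} := by
  obtain ⟨L, hL⟩ : ∃ L, ∀ k l, log (c / M k l) ≤ L := by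
    obtain ⟨L, hL⟩ :=
      (Set.finite_range fun p : Fin (m + 1) × Fin (m + 1) => log (c / M p.1 p.2)).bddAbove
    exact ⟨L, fun k l => hL ⟨(k, l), rfl⟩⟩
  have hbound : ∀ u : Fin (m + 1) → ℝ, ∑ k, u k = 0 → scalingPotential M u ≤ c →
      ∀ i, u i ≤ (m + 2) * L / 2 := fun u hsum hu =>
    le_of_sum_nonneg_of_no_large_block u hsum.ge fun S T hS hT hlarge =>
      hblock S T hS hT fun s hs t ht => by
        by_contra hne
        have := add_le_log_of_scalingPotential_le hpos hu ((hpos s t).lt_of_ne' hne)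
        linarith [hlarge s hs t ht, hL s t]
  refine (isCompact_Icc (a := fun _ => (m + 2) * L / 2 - (m + 1) * ((m + 2) * L / 2))
    (b := fun _ => (m + 2) * L / 2)).of_isClosed_subset ?_ fun u ⟨hsum, hu⟩ => ?_
  · exact (isClosed_eq (continuous_finsetSum _ fun k _ => continuous_apply k)
      continuous_const).inter (isClosed_le (continuous_scalingPotential M) continuous_const)
  · refine ⟨fun i => ?_, hbound u hsum hu⟩
    simpa using sub_card_mul_le_of_sum_eq_zero hsum (hbound u hsum hu) i

theorem exists_isMinOn_scalingPotential {m : ℕ} {M : Matrix (Fin (m + 1)) (Fin (m + 1)) ℝ}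
    (hpos : ∀ i j, 0 ≤ M i j)
    (hblock : ∀ S T : Finset (Fin (m + 1)), S.Nonempty → T.Nonempty →
      (∀ s ∈ S, ∀ t ∈ T, M s t = 0) → S.card + T.card < m + 1) :
    ∃ u : Fin (m + 1) → ℝ, IsMinOn (scalingPotential M) {w | ∑ k, w k = ∑ k, u k} u := by
  obtain ⟨u, ⟨hu0, hule⟩, hmin⟩ :=
    (isCompact_scalingPotential_sublevel hpos hblock (scalingPotential M 0)).exists_isMinOn
      ⟨0, by simp⟩ (continuous_scalingPotential M).continuousOn
  refine ⟨u, fun w hw => ?_⟩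
  rw [Set.mem_ofPred_eq, hu0] at hw
  rcases le_or_gt (scalingPotential M w) (scalingPotential M 0) with hw0 | hw0
  · exact hmin ⟨hw, hw0⟩
  · exact hule.trans hw0.le

theorem exists_scaling_of_row_weight_eq {n : ℕ} {M : Matrix (Fin n) (Fin n) ℝ} (hsymm : M.IsSymm)
    (hpos : ∀ i j, 0 ≤ M i j) (u : Fin n → ℝ) {μ : ℝ} (hμ : 0 < μ)
    (hrow : ∀ i, ∑ j, M i j * exp (u i + u j) = μ) :
    ∃ d : Fin n → ℝ, (∀ i, 0 < d i) ∧ IsDoublyStochastic (diagonal d * M * diagonal d) := by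
  set d : Fin n → ℝ := fun i => exp (u i) / √μ
  have hentry : ∀ i j, (diagonal d * M * diagonal d) i j = M i j * exp (u i + u j) / μ := by
    intro i j
    rw [mul_diagonal, diagonal_mul, exp_add]
    simp only [d]
    field_simp
    rw [sq_sqrt hμ.le, mul_comm]
  have hrowsum : ∀ i, ∑ j, (diagonal d * M * diagonal d) i j = 1 := fun i => by
    simp only [hentry, ← sum_div, hrow, div_self hμ.ne']
  refine ⟨d, fun i => by positivity, fun i j => ?_, hrowsum, fun j => ?_⟩
  · rw [hentry]
    exact div_nonneg (mul_nonneg (hpos i j) (exp_pos _).le) hμ.le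
  · simpa only [hentry, hsymm.apply, add_comm (u j)] using hrowsum j

/-- If `M` is a symmetric matrix with non-negative entries such that every pair of non-empty
sets `S, T` of indices with `M[S, T] = 0` satisfies `|S| + |T| < n`, then `M` can be
scaled by a positive diagonal matrix `D` so that `D M D` is doubly stochastic. -/
theorem scaling_of_no_large_zero_block (n : ℕ) (M : Matrix (Fin n) (Fin n) ℝ)
    (hsymm : M.IsSymm) (hpos : ∀ i j, 0 ≤ M i j)
    (hblock : ∀ S T : Finset (Fin n), S.Nonempty → T.Nonempty →
      (∀ s ∈ S, ∀ t ∈ T, M s t = 0) → S.card + T.card < n) :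
    ∃ d : Fin n → ℝ, (∀ i, 0 < d i) ∧
      IsDoublyStochastic (diagonal d * M * diagonal d) := by
  rcases n with _ | m
  · exact ⟨fun _ => 1, finZeroElim, finZeroElim, finZeroElim, finZeroElim⟩
  obtain ⟨u, hmin⟩ := exists_isMinOn_scalingPotential hpos hblock
  obtain ⟨j, hj⟩ := exists_pos_of_no_large_zero_block hpos hblock 0
  have hμ : 0 < ∑ l, M 0 l * exp (u 0 + u l) :=
    sum_pos' (fun l _ => mul_nonneg (hpos 0 l) (exp_pos _).le)
      ⟨j, mem_univ j, mul_pos hj (exp_pos _)⟩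
  exact exists_scaling_of_row_weight_eq hsymm hpos u hμ
    fun i => row_weight_eq_of_isMinOn hsymm hmin i 0
end

section
/- Let G be a finite simple graph on n vertices that is C4-free, and let B be a Hermitian weighted adjacency matrix of G such that every row of B has L² norm 1, i.e. Σ_{j=1}^n |B_{ij}|² = 1 for all i ∈ {1,…,n}. Then n_{≥0}(B) ≥ β n, where β = √3 − 3/2. -/
/-!
The eigenvalues `λ` of `B` satisfy `∑ λ = tr B = 0`, `∑ λ² = tr B² = n` and
`∑ λ⁴ = ‖B²‖²_F ≤ 2n`: the diagonal entries of `B²` are the squared row norms `1`, and since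
`G` is `C4`-free two distinct vertices have at most one common neighbour, so each off-diagonal
entry of `B²` is a single product `B i k * B k j`.
For reals `λ` with zero sum, Cauchy–Schwarz and Hölder applied separately to the nonnegative and
the negative ones give `(2√3 - 3) (∑ λ²)² ≤ #{λ ≥ 0} ∑ λ⁴`, and hence `#{λ ≥ 0} ≥ (√3 - 3/2) n`.
-/

open Matrix Finset

/-- A graph is `C4`-free if it has no cycle of length 4 as a (not necessarily induced)
subgraph: there are no four pairwise distinct vertices `a, b, c, d` with
`ab`, `bc`, `cd`, `da` all edges. -/
def C4Free {V : Type*} (G : SimpleGraph V) : Prop :=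
  ∀ a b c d : V, a ≠ b → a ≠ c → a ≠ d → b ≠ c → b ≠ d → c ≠ d →
    G.Adj a b → G.Adj b c → G.Adj c d → ¬ G.Adj d a

namespace Matrix

variable {ι 𝕜 : Type*} [Fintype ι] [RCLike 𝕜] {A : Matrix ι ι 𝕜}

theorem IsHermitian.trace_pow [DecidableEq ι] (hA : A.IsHermitian) (k : ℕ) :
    (A ^ k).trace = ∑ i, (hA.eigenvalues i : 𝕜) ^ k := by
  conv_lhs => rw [hA.spectral_theorem, ← map_pow, Unitary.conjStarAlgAut_apply, trace_mul_cycle,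
    Unitary.coe_star_mul_self, one_mul, diagonal_pow, trace_diagonal]
  simp

theorem IsHermitian.mul_self_apply_self (hA : A.IsHermitian) (i : ι) :
    (A * A) i i = ((∑ j, ‖A i j‖ ^ 2 : ℝ) : 𝕜) := by
  simp only [mul_apply, ← hA.apply i, RCLike.ofReal_sum, RCLike.ofReal_pow, ← RCLike.mul_conj]
  simp [mul_comm]

theorem IsHermitian.trace_mul_self (hA : A.IsHermitian) :
    (A * A).trace = ((∑ i, ∑ j, ‖A i j‖ ^ 2 : ℝ) : 𝕜) := by
  simp only [trace, diag_apply, hA.mul_self_apply_self, RCLike.ofReal_sum]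

theorem IsHermitian.sum_eigenvalues_pow_two_mul [DecidableEq ι] (hA : A.IsHermitian) (k : ℕ) :
    ∑ i, hA.eigenvalues i ^ (2 * k) = ∑ i, ∑ j, ‖(A ^ k) i j‖ ^ 2 := by
  have h := (hA.pow k).trace_mul_self
  rw [← pow_two, ← pow_mul', hA.trace_pow] at h
  exact_mod_cast h

end Matrix

theorem norm_sum_sq_le_sum_norm_sq_of_subsingleton_support {ι E : Type*} [Fintype ι]
    [SeminormedAddCommGroup E] {f : ι → E} (hf : (Function.support f).Subsingleton) :
    ‖∑ k, f k‖ ^ 2 ≤ ∑ k, ‖f k‖ ^ 2 := by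
  obtain h | ⟨k, hk⟩ := hf.eq_empty_or_singleton
  · simp [Function.support_eq_empty_iff.mp h]
  · rw [sum_eq_single k (fun l _ hl => Function.notMem_support.mp (by rw [hk]; exact hl))
      (by simp)]
    exact single_le_sum (f := fun k => ‖f k‖ ^ 2) (fun _ _ => by positivity) (mem_univ k)

namespace C4Free

variable {V : Type*} {G : SimpleGraph V}

theorem commonNeighbors_subsingleton (hG : C4Free G) {i j : V} (hij : i ≠ j) :
    (G.commonNeighbors i j).Subsingleton := by
  intro k ⟨hik, hjk⟩ l ⟨hil, hjl⟩
  by_contra hkl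
  exact hG i k j l hik.ne hij hil.ne hjk.ne' hkl hjl.ne hik hjk.symm hjl hil.symm

variable [Fintype V] {𝕜 : Type*} [RCLike 𝕜] {B : Matrix V V 𝕜}

theorem norm_mul_self_apply_sq_le (hG : C4Free G) (hsupp : ∀ i j, ¬ G.Adj i j → B i j = 0)
    {i j : V} (hij : i ≠ j) :
    ‖(B * B) i j‖ ^ 2 ≤ ∑ k, ‖B i k‖ ^ 2 * ‖B k j‖ ^ 2 := by
  have hsub : (Function.support fun k => B i k * B k j).Subsingleton := by
    refine (hG.commonNeighbors_subsingleton hij).anti fun k hk => ?_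
    have hk' : B i k ≠ 0 ∧ B k j ≠ 0 := mul_ne_zero_iff.mp hk
    exact ⟨not_not.mp (mt (hsupp i k) hk'.1), (not_not.mp (mt (hsupp k j) hk'.2)).symm⟩
  simpa only [mul_apply, norm_mul, mul_pow] using
    norm_sum_sq_le_sum_norm_sq_of_subsingleton_support hsub

theorem sum_norm_mul_self_apply_sq_le [DecidableEq V] (hG : C4Free G) (hB : B.IsHermitian)
    (hsupp : ∀ i j, ¬ G.Adj i j → B i j = 0) (hnorm : ∀ i, ∑ j, ‖B i j‖ ^ 2 = 1) (i : V) :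
    ∑ j, ‖(B * B) i j‖ ^ 2 ≤ 2 := by
  have hdiag : ‖(B * B) i i‖ = 1 := by simp [hB.mul_self_apply_self, hnorm]
  have hoff : ∑ j ∈ univ.erase i, ‖(B * B) i j‖ ^ 2 ≤ 1 := calc
    _ ≤ ∑ j ∈ univ.erase i, ∑ k, ‖B i k‖ ^ 2 * ‖B k j‖ ^ 2 :=
      sum_le_sum fun j hj => hG.norm_mul_self_apply_sq_le hsupp (ne_of_mem_erase hj).symm
    _ ≤ ∑ j, ∑ k, ‖B i k‖ ^ 2 * ‖B k j‖ ^ 2 :=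
      sum_le_sum_of_subset_of_nonneg (erase_subset i univ) fun _ _ _ => by positivity
    _ = 1 := by simp only [sum_comm (γ := V), ← mul_sum, hnorm, mul_one]
  rw [← add_sum_erase univ _ (mem_univ i), hdiag]
  linarith

theorem sum_sum_norm_mul_self_apply_sq_le [DecidableEq V] (hG : C4Free G) (hB : B.IsHermitian)
    (hsupp : ∀ i j, ¬ G.Adj i j → B i j = 0) (hnorm : ∀ i, ∑ j, ‖B i j‖ ^ 2 = 1) :
    ∑ i, ∑ j, ‖(B * B) i j‖ ^ 2 ≤ 2 * Fintype.card V := by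
  simpa [mul_comm] using sum_le_sum fun i (_ : i ∈ univ) =>
    hG.sum_norm_mul_self_apply_sq_le hB hsupp hnorm i

end C4Free

theorem Finset.sum_sq_pow_three_le_sq_sum_mul_sum_pow_four {ι : Type*} (s : Finset ι) {y : ι → ℝ}
    (hy : ∀ i ∈ s, 0 ≤ y i) :
    (∑ i ∈ s, y i ^ 2) ^ 3 ≤ (∑ i ∈ s, y i) ^ 2 * ∑ i ∈ s, y i ^ 4 := by
  have h13 : (∑ i ∈ s, y i ^ 2) ^ 2 ≤ (∑ i ∈ s, y i) * ∑ i ∈ s, y i ^ 3 :=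
    sum_sq_le_sum_mul_sum_of_sq_le_mul s hy (fun i hi => pow_nonneg (hy i hi) 3)
      fun i _ => le_of_eq (by ring)
  have h24 : (∑ i ∈ s, y i ^ 3) ^ 2 ≤ (∑ i ∈ s, y i ^ 2) * ∑ i ∈ s, y i ^ 4 :=
    sum_sq_le_sum_mul_sum_of_sq_le_mul s (fun i hi => pow_nonneg (hy i hi) 2)
      (fun i hi => pow_nonneg (hy i hi) 4) fun i _ => le_of_eq (by ring)
  have h1 : 0 ≤ ∑ i ∈ s, y i := sum_nonneg hy
  have h2 : 0 ≤ ∑ i ∈ s, y i ^ 2 := sum_nonneg fun i _ => sq_nonneg _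
  have h3 : 0 ≤ ∑ i ∈ s, y i ^ 3 := sum_nonneg fun i hi => pow_nonneg (hy i hi) 3
  obtain h2 | h2 := h2.eq_or_lt
  · rw [← h2, zero_pow three_ne_zero]; positivity
  refine le_of_mul_le_mul_right ?_ h2
  calc (∑ i ∈ s, y i ^ 2) ^ 3 * ∑ i ∈ s, y i ^ 2 = ((∑ i ∈ s, y i ^ 2) ^ 2) ^ 2 := by ring
    _ ≤ ((∑ i ∈ s, y i) * ∑ i ∈ s, y i ^ 3) ^ 2 := by gcongr
    _ = (∑ i ∈ s, y i) ^ 2 * (∑ i ∈ s, y i ^ 3) ^ 2 := by ring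
    _ ≤ (∑ i ∈ s, y i) ^ 2 * ((∑ i ∈ s, y i ^ 2) * ∑ i ∈ s, y i ^ 4) := by gcongr
    _ = _ := by ring

-- `√3` is optimal: equality holds at `t = (s + t) / √3`
theorem two_mul_sqrt_three_sub_three_mul_le_pow_three_add_pow_three {s t : ℝ} (h : 0 ≤ s + t) :
    (2 * √3 - 3) * (s + t) ^ 2 * t ≤ s ^ 3 + t ^ 3 := by
  have h3 : √3 ^ 2 = 3 := Real.sq_sqrt (by norm_num)
  have hdiff : s ^ 3 + t ^ 3 - (2 * √3 - 3) * (s + t) ^ 2 * t =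
      (s + t) * (s + t - √3 * t) ^ 2 := by
    linear_combination (-(s + t) * t ^ 2) * h3
  linarith [mul_nonneg h (sq_nonneg (s + t - √3 * t))]

theorem two_mul_sqrt_three_sub_three_mul_sq_sum_sq_le {ι : Type*} [Fintype ι] (x : ι → ℝ)
    (hx : ∑ i, x i = 0) :
    (2 * √3 - 3) * (∑ i, x i ^ 2) ^ 2 ≤ #{i | 0 ≤ x i} * ∑ i, x i ^ 4 := by
  set P : Finset ι := {i | 0 ≤ x i}
  set N : Finset ι := {i | ¬ 0 ≤ x i}
  set p : ℝ := ((#P : ℕ) : ℝ)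
  set t := ∑ i ∈ P, x i ^ 2
  set s := ∑ i ∈ N, x i ^ 2
  set T := ∑ i ∈ P, x i
  have hsplit (f : ℝ → ℝ) : ∑ i, f (x i) = ∑ i ∈ P, f (x i) + ∑ i ∈ N, f (x i) :=
    (sum_filter_add_sum_filter_not univ _ _).symm
  have hT : T = ∑ i ∈ N, -x i := by
    have := hsplit id; simp only [id, hx] at this; rw [sum_neg_distrib]; linarith
  have hTt : T ^ 2 ≤ p * t := sq_sum_le_card_mul_sum_sq
  have htQ : t ^ 2 ≤ p * ∑ i ∈ P, x i ^ 4 := by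
    have := sq_sum_le_card_mul_sum_sq (s := P) (f := fun i => x i ^ 2)
    simp only [← pow_mul] at this
    exact this
  have hsR : s ^ 3 ≤ T ^ 2 * ∑ i ∈ N, x i ^ 4 := by
    have := sum_sq_pow_three_le_sq_sum_mul_sum_pow_four N (y := fun i => -x i)
      fun i hi => by simp only [N, mem_filter] at hi; linarith
    simpa only [neg_sq, Even.neg_pow (by decide : Even 4), ← hT] using this
  have ht : 0 ≤ t := sum_nonneg fun i _ => sq_nonneg _
  have hs : 0 ≤ s := sum_nonneg fun i _ => sq_nonneg _
  have hR : 0 ≤ ∑ i ∈ N, x i ^ 4 := sum_nonneg fun i _ => by positivity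
  have hcubes : s ^ 3 + t ^ 3 ≤ p * t * ∑ i, x i ^ 4 := by
    rw [hsplit (· ^ 4)]
    nlinarith [mul_le_mul_of_nonneg_right hTt hR, mul_le_mul_of_nonneg_left htQ ht]
  rw [hsplit (· ^ 2)]
  change (2 * √3 - 3) * (t + s) ^ 2 ≤ p * _
  obtain ht0 | ht0 := ht.eq_or_lt
  · have hT0 : T ^ 2 = 0 := le_antisymm (by rwa [← ht0, mul_zero] at hTt) (sq_nonneg T)
    have hs0 : s = 0 := le_antisymm (le_of_not_gt fun h => by
      nlinarith [pow_pos h 3, mul_nonneg (sq_nonneg T) hR]) hs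
    calc _ = (0 : ℝ) := by rw [← ht0, hs0]; ring
      _ ≤ _ := mul_nonneg (Nat.cast_nonneg _) (sum_nonneg fun i _ => by positivity)
  · refine le_of_mul_le_mul_right ?_ ht0
    calc (2 * √3 - 3) * (t + s) ^ 2 * t = (2 * √3 - 3) * (s + t) ^ 2 * t := by ring
      _ ≤ s ^ 3 + t ^ 3 :=
        two_mul_sqrt_three_sub_three_mul_le_pow_three_add_pow_three (by positivity)
      _ ≤ p * t * ∑ i, x i ^ 4 := hcubes
      _ = p * (∑ i, x i ^ 4) * t := by ring

/-- If `G` is a `C4`-free graph on `n` vertices and `B` is a Hermitian weighted adjacency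
matrix of `G` each of whose rows has `L²` norm `1`, then `B` has at least `β n`
non-negative eigenvalues, where `β = √3 - 3/2`. -/
theorem inertia_bound_C4_free_normalized (n : ℕ) (G : SimpleGraph (Fin n)) (hG : C4Free G)
    (B : Matrix (Fin n) (Fin n) ℂ) (hB : B.IsHermitian)
    (hsupp : ∀ i j, ¬ G.Adj i j → B i j = 0)
    (hnorm : ∀ i, ∑ j, ‖B i j‖ ^ 2 = 1) :
    (Real.sqrt 3 - 3 / 2) * n ≤ (Fintype.card {i : Fin n // 0 ≤ hB.eigenvalues i} : ℝ) := by
  have hx1 : ∑ i, hB.eigenvalues i = 0 := by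
    have htr : B.trace = 0 := sum_eq_zero fun i _ => hsupp i i (G.loopless.irrefl i)
    have h := hB.trace_eq_sum_eigenvalues
    rwa [htr, ← RCLike.ofReal_sum, eq_comm, RCLike.ofReal_eq_zero] at h
  have hx2 : ∑ i, hB.eigenvalues i ^ 2 = n := by
    simpa [hnorm] using hB.sum_eigenvalues_pow_two_mul 1
  have hx4 : ∑ i, hB.eigenvalues i ^ 4 ≤ 2 * n := by
    rw [hB.sum_eigenvalues_pow_two_mul 2, pow_two]
    simpa using hG.sum_sum_norm_mul_self_apply_sq_le hB hsupp hnorm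
  have key := two_mul_sqrt_three_sub_three_mul_sq_sum_sq_le _ hx1
  rw [hx2] at key
  rw [Fintype.card_subtype]
  rcases n.eq_zero_or_pos with rfl | hn
  · simp
  · have hn' : (0 : ℝ) < n := by exact_mod_cast hn
    nlinarith [key.trans (mul_le_mul_of_nonneg_left hx4 (Nat.cast_nonneg _))]
end

section
/- Let G be a finite simple graph on vertex set {1,…,n} that is C4-free, and let B be a Hermitian weighted adjacency matrix of G. Then the trace of B⁴ satisfies tr(B⁴) = 2 Σ_{i=1}^n (Σ_{j=1}^n |B_{ij}|²)² − Σ_{i=1}^n Σ_{j=1}^n |B_{ij}|⁴ (where tr(B⁴) is a non-negative real number since B⁴ = (B²)² with B² Hermitian). -/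
/-! Expand `tr(B⁴)` as a sum over closed walks `i → j → k → l → i`. Since `B` has zero diagonal
and `G` has no `4`-cycle, a walk of nonzero weight has `i = k` or `j = l`, so by
inclusion–exclusion only walks that go back and forth along edges survive; their weights are
`|Bᵢⱼ|²|Bᵢₗ|²` because `Bⱼᵢ = conj Bᵢⱼ`. -/

open Matrix Finset

theorem Fintype.sum_four_eq_of_eq_zero_of_ne_of_ne {ι M : Type*} [Fintype ι] [DecidableEq ι]
    [AddCommGroup M] (f : ι → ι → ι → ι → M) (hf : ∀ i j k l, i ≠ k → j ≠ l → f i j k l = 0) :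
    ∑ i, ∑ j, ∑ k, ∑ l, f i j k l =
      ∑ i, ∑ j, ∑ l, f i j i l + ∑ i, ∑ j, ∑ k, f i j k j - ∑ i, ∑ j, f i j i j := by
  have split : f = fun i j k l => (if i = k then f i j k l else 0) +
      (if j = l then f i j k l else 0) - (if i = k then if j = l then f i j k l else 0 else 0) := by
    ext i j k l
    by_cases hik : i = k <;> by_cases hjl : j = l <;> simp [hik, hjl, hf]
  conv_lhs => rw [split]
  simp [Finset.sum_add_distrib, Finset.sum_sub_distrib, Finset.sum_ite_irrel]

theorem C4Free.closed_walk_prod_eq_zero {V R : Type*} [MulZeroClass R] {G : SimpleGraph V}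
    (hG : C4Free G) {B : Matrix V V R} (hB : ∀ i j, ¬ G.Adj i j → B i j = 0)
    {i j k l : V} (hik : i ≠ k) (hjl : j ≠ l) : B i j * B j k * B k l * B l i = 0 := by
  by_cases hij : G.Adj i j
  · by_cases hjk : G.Adj j k
    · by_cases hkl : G.Adj k l
      · by_cases hil : i = l
        · subst hil
          rw [hB i i G.irrefl, mul_zero]
        · rw [hB l i (hG i j k l hij.ne hik hil hjk.ne hjl hkl.ne hij hjk hkl), mul_zero]
      · rw [hB k l hkl, mul_zero, zero_mul]
    · rw [hB j k hjk, mul_zero, zero_mul, zero_mul]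
  · rw [hB i j hij, zero_mul, zero_mul, zero_mul]

theorem Matrix.trace_pow_four {V R : Type*} [Fintype V] [DecidableEq V] [Semiring R]
    (B : Matrix V V R) :
    (B ^ 4).trace = ∑ i, ∑ j, ∑ k, ∑ l, B i j * B j k * B k l * B l i := by
  simp only [pow_succ, pow_zero, Matrix.one_mul, Matrix.trace, Matrix.diag, Matrix.mul_apply,
    Finset.sum_mul]
  refine Fintype.sum_congr _ _ fun i => ?_
  rw [Finset.sum_comm]
  exact (Fintype.sum_congr _ _ fun k => Finset.sum_comm).trans Finset.sum_comm

theorem Matrix.trace_pow_four_of_C4Free {V R : Type*} [Fintype V] [DecidableEq V] [CommRing R]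
    {G : SimpleGraph V} (hG : C4Free G) {B : Matrix V V R} (hB : ∀ i j, ¬ G.Adj i j → B i j = 0) :
    (B ^ 4).trace = 2 * ∑ i, (B * B) i i ^ 2 - ∑ i, ∑ j, (B i j * B j i) ^ 2 := by
  have back_at_i : ∑ i, ∑ j, ∑ l, B i j * B j i * B i l * B l i = ∑ i, (B * B) i i ^ 2 := by
    simp only [sq, mul_apply, Finset.sum_mul_sum]
    exact Fintype.sum_congr _ _ fun i => Fintype.sum_congr _ _ fun j =>
      Fintype.sum_congr _ _ fun l => by ring
  have back_at_j : ∑ i, ∑ j, ∑ k, B i j * B j k * B k j * B j i = ∑ j, (B * B) j j ^ 2 := by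
    simp only [sq, mul_apply, Finset.sum_mul_sum]
    rw [Finset.sum_comm]
    exact Fintype.sum_congr _ _ fun j => Fintype.sum_congr _ _ fun i =>
      Fintype.sum_congr _ _ fun k => by ring
  have back_and_forth :
      ∑ i, ∑ j, B i j * B j i * B i j * B j i = ∑ i, ∑ j, (B i j * B j i) ^ 2 := by
    simp only [sq, mul_assoc]
  rw [trace_pow_four, Fintype.sum_four_eq_of_eq_zero_of_ne_of_ne _
    fun i j k l => hG.closed_walk_prod_eq_zero hB, back_at_i, back_at_j, back_and_forth, two_mul]

theorem Matrix.IsHermitian.apply_mul_apply_swap {V 𝕜 : Type*} [RCLike 𝕜] {B : Matrix V V 𝕜}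
    (hB : B.IsHermitian) (i j : V) : B i j * B j i = ((‖B i j‖ ^ 2 : ℝ) : 𝕜) := by
  rw [← hB.apply j i, RCLike.star_def, RCLike.mul_conj, RCLike.ofReal_pow]

/-- If `G` is a `C4`-free graph on `n` vertices and `B` is a Hermitian weighted adjacency
matrix of `G`, then
`tr(B⁴) = 2 ∑ᵢ (∑ⱼ |Bᵢⱼ|²)² - ∑ᵢ ∑ⱼ |Bᵢⱼ|⁴`. -/
theorem trace_pow_four_of_C4_free (n : ℕ) (G : SimpleGraph (Fin n)) (hG : C4Free G)
    (B : Matrix (Fin n) (Fin n) ℂ) (hB : B.IsHermitian)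
    (hsupp : ∀ i j, ¬ G.Adj i j → B i j = 0) :
    (B ^ 4).trace =
      ((2 * ∑ i, (∑ j, ‖B i j‖ ^ 2) ^ 2 - ∑ i, ∑ j, ‖B i j‖ ^ 4 : ℝ) : ℂ) := by
  rw [trace_pow_four_of_C4Free hG hsupp]
  simp only [mul_apply, hB.apply_mul_apply_swap]
  push_cast [← pow_mul]
  rfl
end

section
/- For every finite simple graph G on n vertices, there exists a weighted adjacency matrix A of G such that n_{≥0}(A) = χ(Ḡ), the clique cover number of G (equal to the chromatic number of the complement graph Ḡ). -/
/-!
Partition the vertices into `k = χ(Ḡ)` cliques and let `B` be the 0/1 matrix with `B i j = 1`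
iff `i` and `j` lie in the same clique; take `A = B - 1`, which is supported on the edges of `G`.
With `N` the vertex–clique incidence matrix, `B = N Nᵀ` is positive semidefinite of rank `k`, and
`B² - B = N (NᵀN - 1) Nᵀ` is positive semidefinite because `NᵀN` is diagonal with the clique sizes
(all `≥ 1`) on the diagonal. So every eigenvalue of `B` is `0` or `≥ 1`, i.e. every eigenvalue of
`A` is `-1` or `≥ 0`, and the non-negative ones are counted by `rank B = k`.
-/

open Matrix Finset
open scoped ComplexOrder

namespace Matrix

section Spectrum

variable {𝕜 : Type*} [RCLike 𝕜] {n : Type*} [Fintype n]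

lemma PosSemidef.nonneg_of_mulVec_eq_smul {M : Matrix n n 𝕜} (hM : M.PosSemidef) {v : n → 𝕜}
    (hv : v ≠ 0) {c : ℝ} (h : M *ᵥ v = c • v) : 0 ≤ c := by
  have hquad := hM.dotProduct_mulVec_nonneg v
  rw [h, dotProduct_smul, RCLike.real_smul_eq_coe_mul, RCLike.nonneg_iff,
    RCLike.re_ofReal_mul] at hquad
  have hnorm : 0 < star v ⬝ᵥ v := dotProduct_star_self_pos_iff.mpr hv
  exact nonneg_of_mul_nonneg_left hquad.1 (RCLike.pos_iff.mp hnorm).1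

lemma PosSemidef.eq_zero_or_one_le_of_mulVec_eq_smul {B : Matrix n n 𝕜} (hB : B.PosSemidef)
    (hB2 : (B * B - B).PosSemidef) {v : n → 𝕜} (hv : v ≠ 0) {c : ℝ} (h : B *ᵥ v = c • v) :
    c = 0 ∨ 1 ≤ c := by
  have hc : 0 ≤ c := hB.nonneg_of_mulVec_eq_smul hv h
  have hc2 : 0 ≤ c * c - c := hB2.nonneg_of_mulVec_eq_smul hv <| by
    rw [sub_mulVec, ← mulVec_mulVec, h, mulVec_smul, h, smul_smul, sub_smul]
  rcases hc.eq_or_lt with hc0 | hcpos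
  · exact Or.inl hc0.symm
  · exact Or.inr (by nlinarith)

variable [DecidableEq n] {A : Matrix n n 𝕜}

lemma IsHermitian.rank_add_one (hA : A.IsHermitian) :
    (A + 1).rank = Fintype.card {i // hA.eigenvalues i + 1 ≠ 0} := by
  conv_lhs => rw [hA.spectral_theorem,
    ← map_one (Unitary.conjStarAlgAut 𝕜 _ hA.eigenvectorUnitary), ← map_add,
    Unitary.conjStarAlgAut_apply, ← Unitary.coe_star, ← diagonal_one, diagonal_add]
  rw [rank_mul_eq_left_of_isUnit_det _ _ (UnitaryGroup.det_isUnit _),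
    rank_mul_eq_right_of_isUnit_det _ _ (UnitaryGroup.det_isUnit _), rank_diagonal]
  simp only [Function.comp_apply]
  norm_cast

lemma IsHermitian.card_nonneg_eigenvalues_eq_rank {B : Matrix n n 𝕜} (hA : (B - 1).IsHermitian)
    (hB : B.PosSemidef) (hB2 : (B * B - B).PosSemidef) :
    Fintype.card {i // 0 ≤ hA.eigenvalues i} = B.rank := by
  conv_rhs => rw [← sub_add_cancel B 1, hA.rank_add_one]
  refine Fintype.card_congr (Equiv.subtypeEquivRight fun i => ?_)
  have hv : ⇑(hA.eigenvectorBasis i) ≠ 0 :=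
    (WithLp.ofLp_eq_zero 2).ne.2 (hA.eigenvectorBasis.orthonormal.ne_zero i)
  have hBv : B *ᵥ ⇑(hA.eigenvectorBasis i) =
      (hA.eigenvalues i + 1) • ⇑(hA.eigenvectorBasis i) := by
    rw [add_smul, one_smul, ← hA.mulVec_eigenvectorBasis, sub_mulVec, one_mulVec, sub_add_cancel]
  rcases hB.eq_zero_or_one_le_of_mulVec_eq_smul hB2 hv hBv with h | h
  · exact iff_of_false (by linarith) (not_not.mpr h)
  · exact iff_of_true (by linarith) (by linarith)

end Spectrum

section Fibers

/-! `(1 : Matrix ι ι R).submatrix f id` is the incidence matrix of the fibres of `f : V → ι`. -/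

variable {V ι R : Type*} [DecidableEq ι]

lemma one_submatrix_mul_transpose [Fintype ι] [CommSemiring R] (f : V → ι) :
    (1 : Matrix ι ι R).submatrix f id * ((1 : Matrix ι ι R).submatrix f id)ᵀ =
      (1 : Matrix ι ι R).submatrix f f := by
  rw [transpose_submatrix, transpose_one, ← submatrix_mul _ _ _ _ _ Function.bijective_id,
    mul_one]

lemma transpose_one_submatrix_mul [Fintype V] [CommSemiring R] (f : V → ι) :
    ((1 : Matrix ι ι R).submatrix f id)ᵀ * (1 : Matrix ι ι R).submatrix f id =
      diagonal fun t => (#{v | f v = t} : R) := by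
  ext s t
  simp only [mul_apply, transpose_apply, submatrix_apply, id, one_apply, diagonal_apply]
  split_ifs with h
  · subst h; simp +contextual [Finset.sum_boole]
  · exact Finset.sum_eq_zero fun v _ => by split_ifs <;> simp_all

lemma rank_one_submatrix_of_surjective [Fintype ι] [Field R] {f : V → ι} (hf : f.Surjective) :
    ((1 : Matrix ι ι R).submatrix f id).rank = Fintype.card ι := by
  refine le_antisymm (rank_le_card_width _) ?_
  calc Fintype.card ι = (1 : Matrix ι ι R).rank := rank_one.symm
    _ = (((1 : Matrix ι ι R).submatrix f id).submatrix (Function.surjInv hf) id).rank := by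
      rw [submatrix_submatrix, Function.comp_id, (Function.rightInverse_surjInv hf).comp_eq_id]
      rfl
    _ ≤ _ := rank_submatrix_le _ _ _

variable [Fintype V] [Fintype ι]

lemma posSemidef_one_submatrix_mul_self_sub {f : V → ι} (hf : f.Surjective) :
    ((1 : Matrix ι ι ℝ).submatrix f f * (1 : Matrix ι ι ℝ).submatrix f f -
      (1 : Matrix ι ι ℝ).submatrix f f).PosSemidef := by
  have hfiber : ∀ t, (1 : ℝ) ≤ #{v | f v = t} := fun t => by
    obtain ⟨v, rfl⟩ := hf t
    exact_mod_cast Finset.card_pos.mpr ⟨v, by simp⟩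
  have hD : (diagonal fun t => (#{v | f v = t} : ℝ) - 1).PosSemidef :=
    posSemidef_diagonal_iff.mpr fun t => sub_nonneg.mpr (hfiber t)
  have hfactor : (1 : Matrix ι ι ℝ).submatrix f id *
      (diagonal fun t => (#{v | f v = t} : ℝ) - 1) * ((1 : Matrix ι ι ℝ).submatrix f id)ᴴ =
      (1 : Matrix ι ι ℝ).submatrix f f * (1 : Matrix ι ι ℝ).submatrix f f -
        (1 : Matrix ι ι ℝ).submatrix f f := by
    rw [conjTranspose_eq_transpose_of_trivial, ← diagonal_sub, diagonal_one,
      ← transpose_one_submatrix_mul, ← one_submatrix_mul_transpose]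
    simp only [Matrix.mul_sub, Matrix.sub_mul, Matrix.mul_one, Matrix.mul_assoc]
  exact hfactor ▸ hD.mul_mul_conjTranspose_same _

theorem card_nonneg_eigenvalues_one_submatrix_sub_one [DecidableEq V] {f : V → ι}
    (hf : f.Surjective) (hA : ((1 : Matrix ι ι ℝ).submatrix f f - 1).IsHermitian) :
    Fintype.card {v // 0 ≤ hA.eigenvalues v} = Fintype.card ι := by
  rw [hA.card_nonneg_eigenvalues_eq_rank (PosSemidef.one.submatrix f)
      (posSemidef_one_submatrix_mul_self_sub hf), ← one_submatrix_mul_transpose,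
    rank_self_mul_transpose, rank_one_submatrix_of_surjective hf]

end Fibers

end Matrix

lemma SimpleGraph.exists_surjective_coloring_chromaticNumber {V : Type*} [Finite V]
    (G : SimpleGraph V) :
    ∃ (k : ℕ) (C : G.Coloring (Fin k)), Function.Surjective C ∧ G.chromaticNumber = k := by
  have hne : G.chromaticNumber ≠ ⊤ :=
    chromaticNumber_ne_top_iff_exists.mpr ⟨_, G.colorable_chromaticNumber_of_fintype⟩
  have hk : G.chromaticNumber = G.chromaticNumber.toNat := (ENat.natCast_toNat hne).symm
  obtain ⟨C⟩ := G.colorable_chromaticNumber_of_fintype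
  exact ⟨_, C, le_chromaticNumber_iff_forall_surjective.mp hk.ge C, hk⟩

/-- **Alon's observation.** Every graph `G` on `n` vertices has a symmetric weighted
adjacency matrix `A` whose number of non-negative eigenvalues (with multiplicity) equals
the clique cover number of `G`, i.e. the chromatic number of the complement of `G`. -/
theorem exists_weight_matrix_nonneg_eigenvalues_eq_cliqueCover (n : ℕ)
    (G : SimpleGraph (Fin n)) :
    ∃ (A : Matrix (Fin n) (Fin n) ℝ) (hA : A.IsHermitian),
      (∀ i j, ¬ G.Adj i j → A i j = 0) ∧
      (Fintype.card {i : Fin n // 0 ≤ hA.eigenvalues i} : ℕ∞) = Gᶜ.chromaticNumber := by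
  obtain ⟨k, C, hC, hk⟩ := Gᶜ.exists_surjective_coloring_chromaticNumber
  have hA : ((1 : Matrix (Fin k) (Fin k) ℝ).submatrix C C - 1).IsHermitian :=
    (isHermitian_one.submatrix C).sub isHermitian_one
  refine ⟨_, hA, fun i j hij => ?_, ?_⟩
  · by_cases hdiag : i = j
    · subst hdiag
      simp
    · have hcolor : C i ≠ C j := C.valid ⟨hdiag, hij⟩
      simp [one_apply_ne hdiag, one_apply_ne hcolor]
  · rw [card_nonneg_eigenvalues_one_submatrix_sub_one hC hA, Fintype.card_fin, hk]
end

section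
/- Let d ≥ 1 and let G be the disjoint union of the complete bipartite graph K_{d,d} with d disjoint copies of the complete graph K_{d+1}, so that G has n = 2d + d(d+1) vertices. Then α(G) = 2d, and the (ordinary 0/1) adjacency matrix of G has maximum eigenvalue λ_max = d and minimum eigenvalue λ_min = −d; consequently |λ_min/(λ_max − λ_min)| · n = n/2. -/
open Matrix Finset

attribute [local instance] Classical.propDecidable

/-- `d` disjoint copies of the complete graph `K_{d+1}`, on vertex set
`Fin d × Fin (d+1)`: two vertices are adjacent iff they are distinct and lie in the same
copy. -/
def cliqueCopies (d : ℕ) : SimpleGraph (Fin d × Fin (d + 1)) where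
  Adj u v := u.1 = v.1 ∧ u ≠ v
  symm := ⟨fun _ _ h => ⟨h.1.symm, h.2.symm⟩⟩
  loopless := ⟨fun _ h => h.2 rfl⟩

/-- The disjoint union of the complete bipartite graph `K_{d,d}` with `d` disjoint copies of
the complete graph `K_{d+1}`. -/
def bipartitePlusCliques (d : ℕ) :
    SimpleGraph ((Fin d ⊕ Fin d) ⊕ (Fin d × Fin (d + 1))) :=
  (completeBipartiteGraph (Fin d) (Fin d)).sum (cliqueCopies d)

/-- The adjacency matrix of a simple graph, viewed as a real matrix, is Hermitian. -/
lemma adjMatrix_isHermitian' {V : Type*} [Fintype V] (G : SimpleGraph V)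
    [DecidableRel G.Adj] : (G.adjMatrix ℝ).IsHermitian := by
  ext i j
  simp [Matrix.conjTranspose_apply, SimpleGraph.adj_comm]

/-! The graph is `d`-regular, so Gershgorin's theorem puts every adjacency eigenvalue in `[-d, d]`;
the all-ones vector has eigenvalue `d`, and the vector that is `1` on one side of `K_{d,d}`, `-1`
on the other and `0` on the cliques has eigenvalue `-d`. The vertices are covered by `2d` cliques
(the `d` edges of a perfect matching of `K_{d,d}` and the `d` copies of `K_{d+1}`), so an
independent set has at most `2d` vertices, and one side of `K_{d,d}` together with one vertex of
each `K_{d+1}` attains this. -/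

open Module.End

namespace Matrix

variable {n : Type*} [Fintype n] [DecidableEq n]

theorem hasEigenvalue_toLin'_of_mulVec_eq_smul {R : Type*} [CommRing R] {A : Matrix n n R}
    {μ : R} {v : n → R} (hv : v ≠ 0) (hAv : A *ᵥ v = μ • v) : HasEigenvalue (toLin' A) μ :=
  hasEigenvalue_of_hasEigenvector (x := v) ⟨by rwa [mem_eigenspace_iff, toLin'_apply], hv⟩

theorem IsHermitian.hasEigenvalue_toLin'_iff {A : Matrix n n ℝ} (hA : A.IsHermitian) {μ : ℝ} :
    HasEigenvalue (toLin' A) μ ↔ μ ∈ Set.range hA.eigenvalues := by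
  rw [hasEigenvalue_iff_mem_spectrum, spectrum_toLin', hA.spectrum_real_eq_range_eigenvalues]

end Matrix

namespace SimpleGraph

variable {V W : Type*}

theorem isIndepSet_iff_forall_not_adj {G : SimpleGraph V} {s : Set V} :
    G.IsIndepSet s ↔ ∀ i ∈ s, ∀ j ∈ s, ¬G.Adj i j :=
  ⟨fun h _ hi _ hj hij => h hi hj hij.ne hij, fun h _ hi _ hj _ => h _ hi _ hj⟩

theorem IsIndepSet.card_le_of_isClique_preimage {ι : Type*} [Fintype ι] {G : SimpleGraph V}
    {f : V → ι} (hf : ∀ i, G.IsClique (f ⁻¹' {i})) {s : Finset V} (hs : G.IsIndepSet s) :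
    #s ≤ Fintype.card ι :=
  card_le_card_of_injOn f (fun _ _ => mem_univ _) fun x hx y hy hxy => by
    by_contra hne
    exact hs hx hy hne (hf (f y) hxy rfl hne)

theorem IsRegularOfDegree.sum {G : SimpleGraph V} {H : SimpleGraph W} [LocallyFinite G]
    [LocallyFinite H] [LocallyFinite (G ⊕g H)] {d : ℕ} (hG : G.IsRegularOfDegree d)
    (hH : H.IsRegularOfDegree d) : (G ⊕g H).IsRegularOfDegree d := by
  rintro (v | w)
  · rw [← card_neighborSet_eq_degree, ← Nat.card_eq_fintype_card, neighborSet_sum_inl,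
      Nat.card_image_of_injective Sum.inl_injective, Nat.card_eq_fintype_card,
      card_neighborSet_eq_degree, hG]
  · rw [← card_neighborSet_eq_degree, ← Nat.card_eq_fintype_card, neighborSet_sum_inr,
      Nat.card_image_of_injective Sum.inr_injective, Nat.card_eq_fintype_card,
      card_neighborSet_eq_degree, hH]

theorem isRegularOfDegree_completeBipartiteGraph (α : Type*) [Fintype α]
    [LocallyFinite (completeBipartiteGraph α α)] :
    (completeBipartiteGraph α α).IsRegularOfDegree (Fintype.card α) := by
  intro v
  have hN : (completeBipartiteGraph α α).neighborSet v =
      Set.range (Sum.elim (fun _ => Sum.inr) (fun _ => Sum.inl) v) := by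
    rcases v with a | a <;> ext (x | x) <;> simp
  rw [← card_neighborSet_eq_degree, ← Nat.card_eq_fintype_card, hN,
    Nat.card_range_of_injective, Nat.card_eq_fintype_card]
  rcases v with a | a
  exacts [Sum.inr_injective, Sum.inl_injective]

theorem adjMatrix_sum (α : Type*) [Zero α] [One α] (G : SimpleGraph V) (H : SimpleGraph W)
    [DecidableRel G.Adj] [DecidableRel H.Adj] [DecidableRel (G ⊕g H).Adj] :
    (G ⊕g H).adjMatrix α = fromBlocks (G.adjMatrix α) 0 0 (H.adjMatrix α) := by
  ext (v | w) (v' | w') <;> simp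

section Spectrum

variable [Fintype V] [DecidableEq V]

theorem IsRegularOfDegree.abs_le_of_hasEigenvalue_adjMatrix {G : SimpleGraph V}
    [DecidableRel G.Adj] {d : ℕ} (hG : G.IsRegularOfDegree d) {μ : ℝ}
    (hμ : HasEigenvalue (toLin' (G.adjMatrix ℝ)) μ) : |μ| ≤ d := by
  obtain ⟨k, hk⟩ := eigenvalue_mem_ball hμ
  have hrow : ∑ j ∈ univ.erase k, ‖G.adjMatrix ℝ k j‖ = d := by
    calc ∑ j ∈ univ.erase k, ‖G.adjMatrix ℝ k j‖ = ∑ j, G.adjMatrix ℝ k j := by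
          rw [sum_erase _ (by simp)]
          refine sum_congr rfl fun j _ => ?_
          rw [Real.norm_of_nonneg (by rw [adjMatrix_apply]; positivity)]
    _ = (G.adjMatrix ℝ *ᵥ Function.const _ 1) k := by simp [mulVec, dotProduct]
    _ = d := by rw [adjMatrix_mulVec_const_apply_of_regular hG, mul_one]
  rwa [hrow, Metric.mem_closedBall, adjMatrix_apply, if_neg (G.irrefl (v := k)),
    Real.dist_0_eq_abs] at hk

theorem IsRegularOfDegree.hasEigenvalue_adjMatrix [Nonempty V] {G : SimpleGraph V}
    [DecidableRel G.Adj] {d : ℕ} (hG : G.IsRegularOfDegree d) :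
    HasEigenvalue (toLin' (G.adjMatrix ℝ)) d := by
  refine Matrix.hasEigenvalue_toLin'_of_mulVec_eq_smul (v := Function.const V 1) ?_ ?_
  · exact fun h => one_ne_zero (congr_fun h (Classical.arbitrary V))
  · ext v
    simp [hG v]

theorem hasEigenvalue_adjMatrix_sum_left [Fintype W] [DecidableEq W] {G : SimpleGraph V}
    {H : SimpleGraph W} [DecidableRel G.Adj] [DecidableRel H.Adj] [DecidableRel (G ⊕g H).Adj]
    {μ : ℝ} (hμ : HasEigenvalue (toLin' (G.adjMatrix ℝ)) μ) :
    HasEigenvalue (toLin' ((G ⊕g H).adjMatrix ℝ)) μ := by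
  obtain ⟨x, hx, hx0⟩ := hμ.exists_hasEigenvector
  rw [mem_eigenspace_iff, toLin'_apply] at hx
  refine Matrix.hasEigenvalue_toLin'_of_mulVec_eq_smul (v := Sum.elim x 0) ?_ ?_
  · exact fun h => hx0 (funext fun v => congr_fun h (.inl v))
  · rw [adjMatrix_sum, fromBlocks_mulVec]
    ext (v | w) <;> simp [hx]

end Spectrum

theorem hasEigenvalue_adjMatrix_completeBipartiteGraph (α : Type*) [Fintype α] [DecidableEq α]
    [Nonempty α] :
    HasEigenvalue (toLin' ((completeBipartiteGraph α α).adjMatrix ℝ)) (-Fintype.card α) := by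
  refine Matrix.hasEigenvalue_toLin'_of_mulVec_eq_smul (v := Sum.elim 1 (-1)) ?_ ?_
  · exact fun h => one_ne_zero (congr_fun h (.inl (Classical.arbitrary α)))
  · ext (v | w) <;> simp [mulVec, dotProduct]

end SimpleGraph

open SimpleGraph

@[simp]
theorem cliqueCopies_adj {d : ℕ} {u v : Fin d × Fin (d + 1)} :
    (cliqueCopies d).Adj u v ↔ u.1 = v.1 ∧ u ≠ v :=
  Iff.rfl

theorem isRegularOfDegree_cliqueCopies (d : ℕ) : (cliqueCopies d).IsRegularOfDegree d := by
  rintro ⟨c, k⟩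
  have hN : (cliqueCopies d).neighborFinset (c, k) =
      (univ.erase k).map ⟨Prod.mk c, Prod.mk_right_injective c⟩ := by
    ext ⟨c', k'⟩
    simp [eq_comm, and_comm]
  rw [← card_neighborFinset_eq_degree, hN, card_map, card_erase_of_mem (mem_univ _), card_univ,
    Fintype.card_fin, Nat.add_sub_cancel]

theorem isRegularOfDegree_bipartitePlusCliques (d : ℕ) :
    (bipartitePlusCliques d).IsRegularOfDegree d := by
  have hK : (completeBipartiteGraph (Fin d) (Fin d)).IsRegularOfDegree d := by
    simpa using isRegularOfDegree_completeBipartiteGraph (Fin d)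
  unfold bipartitePlusCliques
  convert hK.sum (isRegularOfDegree_cliqueCopies d)

theorem hasEigenvalue_adjMatrix_bipartitePlusCliques {d : ℕ} (hd : 1 ≤ d) :
    HasEigenvalue (toLin' ((bipartitePlusCliques d).adjMatrix ℝ)) (-d) := by
  have : Nonempty (Fin d) := ⟨⟨0, hd⟩⟩
  unfold bipartitePlusCliques
  convert hasEigenvalue_adjMatrix_sum_left (H := cliqueCopies d)
    (hasEigenvalue_adjMatrix_completeBipartiteGraph (Fin d))
  simp

/-- The clique cover: `inl a` is the matching edge joining the two copies of `a` in `K_{d,d}`,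
`inr c` the `c`-th copy of `K_{d+1}`. -/
def cliqueIndex (d : ℕ) : (Fin d ⊕ Fin d) ⊕ (Fin d × Fin (d + 1)) → Fin d ⊕ Fin d :=
  Sum.elim (Sum.elim Sum.inl Sum.inl) (Sum.inr ∘ Prod.fst)

theorem isClique_preimage_cliqueIndex (d : ℕ) (i : Fin d ⊕ Fin d) :
    (bipartitePlusCliques d).IsClique (cliqueIndex d ⁻¹' {i}) := by
  rintro x rfl y hy hne
  rcases x with (a | a) | ⟨c, k⟩ <;> rcases y with (b | b) | ⟨c', k'⟩ <;>
    simp_all [bipartitePlusCliques, cliqueIndex]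

def cliqueTransversal (d : ℕ) : Fin d ⊕ Fin d → (Fin d ⊕ Fin d) ⊕ (Fin d × Fin (d + 1)) :=
  Sum.elim (Sum.inl ∘ Sum.inl) (fun c => Sum.inr (c, 0))

theorem cliqueTransversal_injective (d : ℕ) : (cliqueTransversal d).Injective := by
  rintro (a | a) (b | b) h <;> simp_all [cliqueTransversal]

theorem isIndepSet_range_cliqueTransversal (d : ℕ) :
    (bipartitePlusCliques d).IsIndepSet (Set.range (cliqueTransversal d)) := by
  rintro _ ⟨a | a, rfl⟩ _ ⟨b | b, rfl⟩ hne <;>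
    simp_all [bipartitePlusCliques, cliqueTransversal]

/-- Let `G` be the disjoint union of `K_{d,d}` with `d` copies of `K_{d+1}`, a graph on
`n = 2d + d(d+1)` vertices. Then `α(G) = 2d`, the adjacency matrix of `G` has maximum
eigenvalue `d` and minimum eigenvalue `-d`, and consequently the ratio bound is
`|(-d)/(d - (-d))| * n = n / 2`. -/
theorem ratio_bound_weak_example (d : ℕ) (hd : 1 ≤ d) :
    Fintype.card ((Fin d ⊕ Fin d) ⊕ (Fin d × Fin (d + 1))) = 2 * d + d * (d + 1) ∧
    ((∃ s : Finset ((Fin d ⊕ Fin d) ⊕ (Fin d × Fin (d + 1))),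
        (∀ i ∈ s, ∀ j ∈ s, ¬ (bipartitePlusCliques d).Adj i j) ∧ s.card = 2 * d) ∧
      (∀ s : Finset ((Fin d ⊕ Fin d) ⊕ (Fin d × Fin (d + 1))),
        (∀ i ∈ s, ∀ j ∈ s, ¬ (bipartitePlusCliques d).Adj i j) → s.card ≤ 2 * d)) ∧
    (∀ i, (adjMatrix_isHermitian' (bipartitePlusCliques d)).eigenvalues i ≤ (d : ℝ)) ∧
    (∃ i, (adjMatrix_isHermitian' (bipartitePlusCliques d)).eigenvalues i = (d : ℝ)) ∧
    (∀ i, -(d : ℝ) ≤ (adjMatrix_isHermitian' (bipartitePlusCliques d)).eigenvalues i) ∧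
    (∃ i, (adjMatrix_isHermitian' (bipartitePlusCliques d)).eigenvalues i = -(d : ℝ)) ∧
    |(-(d : ℝ)) / ((d : ℝ) - (-(d : ℝ)))| * ((2 * d + d * (d + 1) : ℕ) : ℝ) =
      ((2 * d + d * (d + 1) : ℕ) : ℝ) / 2 := by
  have : Nonempty (Fin d) := ⟨⟨0, hd⟩⟩
  have hA := adjMatrix_isHermitian' (bipartitePlusCliques d)
  have hreg := isRegularOfDegree_bipartitePlusCliques d
  have hbound (i) : |hA.eigenvalues i| ≤ d :=
    hreg.abs_le_of_hasEigenvalue_adjMatrix (hA.hasEigenvalue_toLin'_iff.2 ⟨i, rfl⟩)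
  have hcard : Fintype.card (Fin d ⊕ Fin d) = 2 * d := by simp [two_mul]
  refine ⟨by simp; ring, ⟨?_, fun s hs => ?_⟩, fun i => (abs_le.1 (hbound i)).2,
    hA.hasEigenvalue_toLin'_iff.1 hreg.hasEigenvalue_adjMatrix, fun i => (abs_le.1 (hbound i)).1,
    hA.hasEigenvalue_toLin'_iff.1 (hasEigenvalue_adjMatrix_bipartitePlusCliques hd), ?_⟩
  · refine ⟨univ.map ⟨cliqueTransversal d, cliqueTransversal_injective d⟩, ?_, ?_⟩
    · simpa [isIndepSet_iff_forall_not_adj] using isIndepSet_range_cliqueTransversal d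
    · rw [card_map, card_univ, hcard]
  · rw [← hcard]
    exact (isIndepSet_iff_forall_not_adj.2 hs).card_le_of_isClique_preimage
      (isClique_preimage_cliqueIndex d)
  · rw [show -(d : ℝ) / (d - -d) = -(1 / 2) by field_simp; ring, abs_neg, abs_of_pos one_half_pos]
    ring
end
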